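/- arXiv:1402.6011 — 5 statements merged into one kernel-verified Lean document; each statement's English description precedes it below -/
import Mathlib

section
/- Fix δ > 0. (i) For every sequence p = p(n) ∈ (0,1) with p(n) → 0 and n·p(n) → ∞, one has limsup_{n→∞} φ(n, p(n), δ) / (n² p(n)² log(1/p(n))) ≤ δ^{2/3}/2 (witnessed by planting a clique on ⌈(δ^{1/3}+o(1)) p n⌉ vertices with all other weights equal to p). (ii) If moreover n·p(n)² → ∞, then limsup_{n→∞} φ(n, p(n), δ) / (n² p(n)² log(1/p(n))) ≤ min{ δ^{2/3}/2 , δ/3 } (witnessed additionally by connecting ⌈(δ/3+o(1)) p² n⌉ vertices to all other vertices with weight 1). -/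
/-!
Both bounds come from explicit feasible weighted graphs in which every weight is `p` except
for a planted set of edges of weight `1`, whose cost is `log (1/p)` each. Planting a clique on
`m ≈ c p n` vertices with `c³ > δ` adds about `c³ p³ n³` triangles at cost `m² log (1/p) / 2`;
joining a hub of `m ≈ c p² n` vertices to everything with `3c > δ` turns about `3 m n²` of the
`p³`-weighted triangles into `p`-weighted ones at cost at most `m n log (1/p)`. Counting only
ordered triangles on distinct vertices keeps both estimates exact up to lower-order terms, and
letting `c` tend to its threshold gives the two limsup bounds.
-/

open Real Filter

/-- The relative entropy function `I_p(x) = x log(x/p) + (1-x) log((1-x)/(1-p))`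
(with the convention `0 · log 0 = 0`, automatic since `Real.log 0 = 0`). -/
noncomputable def Ip (p x : ℝ) : ℝ :=
  x * Real.log (x / p) + (1 - x) * Real.log ((1 - x) / (1 - p))

/-- Weighted graphs on `n` vertices: symmetric, `[0,1]`-valued, zero diagonal. -/
def IsWGraph {n : ℕ} (g : Fin n → Fin n → ℝ) : Prop :=
  (∀ i j, 0 ≤ g i j ∧ g i j ≤ 1) ∧ (∀ i j, g i j = g j i) ∧ (∀ i, g i i = 0)

/-- Triangle density `t(G) = n^{-3} ∑_{i,j,k} g_{ij} g_{jk} g_{ik}`. -/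
noncomputable def triDen {n : ℕ} (g : Fin n → Fin n → ℝ) : ℝ :=
  ((n : ℝ) ^ 3)⁻¹ * ∑ i : Fin n, ∑ j : Fin n, ∑ k : Fin n, g i j * g j k * g i k

/-- Relative entropy of a weighted graph: `I_p(G) = ∑_{i<j} I_p(g_{ij})`. -/
noncomputable def entG {n : ℕ} (p : ℝ) (g : Fin n → Fin n → ℝ) : ℝ :=
  ∑ i : Fin n, ∑ j : Fin n, if i < j then Ip p (g i j) else 0

/-- The discrete variational problem
`φ(n,p,δ) = inf { I_p(G) : G ∈ 𝒢_n, t(G) ≥ (1+δ) p³ }`. -/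
noncomputable def phiDisc (n : ℕ) (p δ : ℝ) : ℝ :=
  sInf { r : ℝ | ∃ g : Fin n → Fin n → ℝ,
    IsWGraph g ∧ triDen g ≥ (1 + δ) * p ^ 3 ∧ r = entG p g }

open Finset InformationTheory

theorem Ip_eq_klFun {p : ℝ} (hp0 : 0 < p) (hp1 : p < 1) (x : ℝ) :
    Ip p x = p * klFun (x / p) + (1 - p) * klFun ((1 - x) / (1 - p)) := by
  have : 1 - p ≠ 0 := by linarith
  simp only [Ip, klFun]
  field_simp
  ring

theorem Ip_nonneg {p x : ℝ} (hp0 : 0 < p) (hp1 : p < 1) (hx0 : 0 ≤ x) (hx1 : x ≤ 1) :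
    0 ≤ Ip p x := by
  have hq : 0 ≤ 1 - p := by linarith
  have hy : 0 ≤ 1 - x := by linarith
  rw [Ip_eq_klFun hp0 hp1]
  exact add_nonneg (mul_nonneg hp0.le (klFun_nonneg (by positivity)))
    (mul_nonneg hq (klFun_nonneg (by positivity)))

theorem sum_ite_lt_le_half {V : Type*} [Fintype V] [LinearOrder V] {f : V → V → ℝ}
    (hsymm : ∀ i j, f i j = f j i) (hf : ∀ i j, 0 ≤ f i j) :
    ∑ i, ∑ j, (if i < j then f i j else 0) ≤ (∑ i, ∑ j, f i j) / 2 := by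
  have hswap : ∑ i, ∑ j, (if j < i then f i j else 0)
      = ∑ i, ∑ j, (if i < j then f i j else 0) := by
    rw [sum_comm]
    simp_rw [hsymm]
  have hle : ∀ i j, (if i < j then f i j else 0) + (if j < i then f i j else 0) ≤ f i j := by
    intro i j
    rcases lt_trichotomy i j with h | rfl | h
    · simp [h, h.not_gt]
    · simpa using hf i i
    · simp [h, h.not_gt]
  have := sum_le_sum fun i (_ : i ∈ univ) => sum_le_sum fun j (_ : j ∈ univ) => hle i j
  simp only [sum_add_distrib, hswap] at this
  linarith

section Triangles

variable {V : Type*} [DecidableEq V]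

def distinctTriples (S : Finset V) : Finset (V × V × V) :=
  (S ×ˢ S ×ˢ S).filter fun x => x.1 ≠ x.2.1 ∧ x.2.1 ≠ x.2.2 ∧ x.1 ≠ x.2.2

theorem mem_distinctTriples {S : Finset V} {x : V × V × V} :
    x ∈ distinctTriples S ↔
      (x.1 ∈ S ∧ x.2.1 ∈ S ∧ x.2.2 ∈ S) ∧ x.1 ≠ x.2.1 ∧ x.2.1 ≠ x.2.2 ∧ x.1 ≠ x.2.2 := by
  simp [distinctTriples]

theorem distinctTriples_mono {S S' : Finset V} (h : S ⊆ S') :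
    distinctTriples S ⊆ distinctTriples S' :=
  filter_subset_filter _ (product_subset_product h (product_subset_product h h))

theorem card_distinctTriples (S : Finset V) :
    (#(distinctTriples S) : ℝ) = #S * (#S - 1) * (#S - 2) := by
  have hpairs : ∀ i ∈ S,
      #((S ×ˢ S).filter fun y : V × V => i ≠ y.1 ∧ y.1 ≠ y.2 ∧ i ≠ y.2)
        = #((S.erase i).offDiag) := by
    intro i _
    congr 1
    ext ⟨j, k⟩
    simp only [mem_filter, mem_product, mem_offDiag, mem_erase]
    tauto
  rw [distinctTriples, card_filter, sum_product, Nat.cast_sum]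
  simp_rw [← card_filter]
  rw [sum_congr rfl fun i hi => by rw [hpairs i hi, offDiag_card, card_erase_of_mem hi]]
  rcases S.eq_empty_or_nonempty with rfl | hS
  · simp
  · rw [sum_const, nsmul_eq_mul]
    push_cast [Nat.cast_sub hS.card_pos, Nat.cast_sub (Nat.le_mul_self _)]
    ring

theorem le_sum_triangles [Fintype V] {g : V → V → ℝ} (hg : ∀ i j, 0 ≤ g i j) {a b : ℝ}
    {U : Finset (V × V × V)} (hU : U ⊆ distinctTriples univ)
    (ha : ∀ x ∈ distinctTriples univ, a ≤ g x.1 x.2.1 * g x.2.1 x.2.2 * g x.1 x.2.2)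
    (hb : ∀ x ∈ U, a + b ≤ g x.1 x.2.1 * g x.2.1 x.2.2 * g x.1 x.2.2) :
    a * #(distinctTriples (univ : Finset V)) + b * #U
      ≤ ∑ i, ∑ j, ∑ k, g i j * g j k * g i k := by
  set w : V × V × V → ℝ := fun x => g x.1 x.2.1 * g x.2.1 x.2.2 * g x.1 x.2.2
  calc a * #(distinctTriples (univ : Finset V)) + b * #U
      = ∑ x ∈ distinctTriples univ \ U, a + ∑ x ∈ U, (a + b) := by
        rw [sum_const, sum_const, card_sdiff_of_subset hU, nsmul_eq_mul, nsmul_eq_mul,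
          Nat.cast_sub (card_le_card hU)]
        ring
    _ ≤ ∑ x ∈ distinctTriples univ \ U, w x + ∑ x ∈ U, w x :=
        add_le_add (sum_le_sum fun x hx => ha x (sdiff_subset hx)) (sum_le_sum hb)
    _ = ∑ x ∈ distinctTriples univ, w x := sum_sdiff hU
    _ ≤ ∑ x, w x := sum_le_sum_of_subset_of_nonneg (subset_univ _) fun x _ _ =>
        mul_nonneg (mul_nonneg (hg _ _) (hg _ _)) (hg _ _)
    _ = ∑ i, ∑ j, ∑ k, g i j * g j k * g i k := by simp only [w, Fintype.sum_prod_type]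

end Triangles

theorem three_mul_le_sub_falling (m k : ℕ) :
    3 * (m * k * (k - 1) : ℝ)
      ≤ (k + m) * (k + m - 1) * (k + m - 2) - k * (k - 1) * (k - 2) := by
  have h : (k + m) * (k + m - 1) * (k + m - 2) - k * (k - 1) * (k - 2)
      - 3 * (m * k * (k - 1) : ℝ) = m * (m - 1) * (3 * k + m - 2) := by ring
  have : 0 ≤ (m * (m - 1) * (3 * k + m - 2) : ℝ) := by
    rcases m with _ | _ | m
    · simp
    · simp
    · push_cast
      ring_nf
      positivity
  linarith

section Planted

variable {V : Type*} [DecidableEq V]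

def planted (A : V → V → Prop) [DecidableRel A] (p : ℝ) : V → V → ℝ :=
  fun i j => if i = j then 0 else if A i j then 1 else p

def plantedClique (S : Finset V) (p : ℝ) : V → V → ℝ := planted (fun i j => i ∈ S ∧ j ∈ S) p

def plantedHub (S : Finset V) (p : ℝ) : V → V → ℝ := planted (fun i j => i ∈ S ∨ j ∈ S) p

variable {A : V → V → Prop} [DecidableRel A] {p : ℝ}

theorem planted_of_ne {i j : V} (h : i ≠ j) : planted A p i j = if A i j then 1 else p :=
  if_neg h

theorem le_planted (hp1 : p ≤ 1) {i j : V} (h : i ≠ j) : p ≤ planted A p i j := by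
  rw [planted_of_ne h]
  split_ifs <;> linarith

theorem planted_nonneg (hp0 : 0 ≤ p) (i j : V) : 0 ≤ planted A p i j := by
  unfold planted
  split_ifs <;> linarith

theorem cube_le_planted_triangle (hp0 : 0 ≤ p) (hp1 : p ≤ 1) {S : Finset V}
    {x : V × V × V} (hx : x ∈ distinctTriples S) :
    p ^ 3 ≤ planted A p x.1 x.2.1 * planted A p x.2.1 x.2.2 * planted A p x.1 x.2.2 := by
  obtain ⟨-, hij, hjk, hik⟩ := mem_distinctTriples.1 hx
  have := le_planted (A := A) hp1 hij
  have := le_planted (A := A) hp1 hjk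
  have := le_planted (A := A) hp1 hik
  have := planted_nonneg (A := A) hp0 x.1 x.2.1
  have := planted_nonneg (A := A) hp0 x.2.1 x.2.2
  calc p ^ 3 = p * p * p := by ring
    _ ≤ _ := by gcongr

theorem clique_triangles [Fintype V] (S : Finset V) (hp0 : 0 ≤ p) (hp1 : p ≤ 1) :
    p ^ 3 * (Fintype.card V * (Fintype.card V - 1) * (Fintype.card V - 2))
        + (1 - p ^ 3) * (#S * (#S - 1) * (#S - 2))
      ≤ ∑ i, ∑ j, ∑ k, plantedClique S p i j * plantedClique S p j k * plantedClique S p i k := by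
  rw [← card_univ, ← card_distinctTriples, ← card_distinctTriples]
  refine le_sum_triangles (planted_nonneg hp0) (distinctTriples_mono (subset_univ S))
    (fun x hx => cube_le_planted_triangle hp0 hp1 hx) fun x hx => ?_
  obtain ⟨⟨hi, hj, hk⟩, hij, hjk, hik⟩ := mem_distinctTriples.1 hx
  simp [planted_of_ne, hij, hjk, hik, hi, hj, hk]

theorem hub_triangles [Fintype V] (S : Finset V) (hp0 : 0 ≤ p) (hp1 : p ≤ 1) :
    p ^ 3 * (Fintype.card V * (Fintype.card V - 1) * (Fintype.card V - 2))
        + 3 * (p - p ^ 3) * (#S * #Sᶜ * (#Sᶜ - 1))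
      ≤ ∑ i, ∑ j, ∑ k, plantedHub S p i j * plantedHub S p j k * plantedHub S p i k := by
  set U := distinctTriples (univ : Finset V) \ distinctTriples Sᶜ
  have hcard : (#U : ℝ) = Fintype.card V * (Fintype.card V - 1) * (Fintype.card V - 2)
      - #Sᶜ * (#Sᶜ - 1) * (#Sᶜ - 2) := by
    rw [card_sdiff_of_subset (distinctTriples_mono (subset_univ _)),
      Nat.cast_sub (card_le_card (distinctTriples_mono (subset_univ _))),
      card_distinctTriples, card_distinctTriples, card_univ]
  have hU : 3 * (#S * #Sᶜ * (#Sᶜ - 1) : ℝ) ≤ #U := by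
    rw [hcard, ← card_add_card_compl S]
    push_cast
    linarith [three_mul_le_sub_falling #S #Sᶜ]
  have hpp : 0 ≤ p - p ^ 3 := by nlinarith [pow_le_one₀ hp0 hp1 (n := 2)]
  calc _ ≤ p ^ 3 * #(distinctTriples (univ : Finset V)) + (p - p ^ 3) * #U := by
        rw [card_distinctTriples, card_univ, mul_assoc 3, mul_left_comm 3]
        gcongr
    _ ≤ _ := le_sum_triangles (planted_nonneg hp0) sdiff_subset
        (fun x hx => cube_le_planted_triangle hp0 hp1 hx) fun x hx => ?_
  obtain ⟨hx, hxS⟩ := mem_sdiff.1 hx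
  obtain ⟨-, hij, hjk, hik⟩ := mem_distinctTriples.1 hx
  have hmem : x.1 ∈ S ∨ x.2.1 ∈ S ∨ x.2.2 ∈ S := by
    by_contra! h
    exact hxS (mem_distinctTriples.2 ⟨by simpa using h, hij, hjk, hik⟩)
  -- two of the three edges of a triangle meeting the hub have weight `1`
  simp only [planted_of_ne, hij, hjk, hik, ne_eq, not_false_eq_true]
  rcases hmem with h | h | h <;> simp [h] <;> split_ifs <;> linarith

theorem isWGraph_planted {n : ℕ} {A : Fin n → Fin n → Prop} [DecidableRel A]
    (hA : ∀ i j, A i j → A j i) (hp0 : 0 ≤ p) (hp1 : p ≤ 1) : IsWGraph (planted A p) := by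
  refine ⟨fun i j => ⟨planted_nonneg hp0 i j, ?_⟩, fun i j => ?_, fun i => if_pos rfl⟩
  · unfold planted
    split_ifs <;> linarith
  · unfold planted
    by_cases hij : i = j
    · subst hij; rfl
    · simp only [hij, Ne.symm hij, if_false, eq_iff_iff.mpr ⟨hA i j, hA j i⟩]

theorem entG_planted_le {n : ℕ} {A : Fin n → Fin n → Prop} [DecidableRel A]
    (hA : ∀ i j, A i j → A j i) (hp0 : 0 < p) (hp1 : p < 1) :
    entG p (planted A p)
      ≤ Real.log (1 / p) / 2 * #(univ.filter fun x : Fin n × Fin n => A x.1 x.2) := by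
  have hL : 0 ≤ Real.log (1 / p) := Real.log_nonneg (by rw [le_div_iff₀ hp0]; linarith)
  set t : Fin n → Fin n → ℝ := fun i j => if A i j then Real.log (1 / p) else 0
  have hIp : ∀ i j, i < j → Ip p (planted A p i j) = t i j := by
    intro i j hij
    rw [planted_of_ne hij.ne]
    split_ifs with h
    · simp [t, h, Ip]
    · simp only [t, h, if_false, Ip]
      rw [div_self hp0.ne', div_self (by linarith : (1:ℝ) - p ≠ 0), Real.log_one]
      ring
  calc entG p (planted A p) = ∑ i, ∑ j, (if i < j then t i j else 0) := by
        refine sum_congr rfl fun i _ => sum_congr rfl fun j _ => ?_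
        split_ifs with h
        · exact hIp i j h
        · rfl
    _ ≤ (∑ i, ∑ j, t i j) / 2 :=
        sum_ite_lt_le_half (fun i j => by simp only [t, eq_iff_iff.mpr ⟨hA i j, hA j i⟩])
          (fun i j => by simp only [t]; split_ifs <;> [exact hL; exact le_rfl])
    _ = _ := by
        rw [← Fintype.sum_prod_type' t, card_filter]
        simp only [t, Nat.cast_sum, Nat.cast_ite, Nat.cast_one, Nat.cast_zero, mul_sum]
        rw [sum_div]
        refine sum_congr rfl fun x _ => ?_
        split_ifs <;> ring

end Planted

theorem entG_nonneg {n : ℕ} {p : ℝ} (hp0 : 0 < p) (hp1 : p < 1) {g : Fin n → Fin n → ℝ}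
    (hg : IsWGraph g) : 0 ≤ entG p g :=
  sum_nonneg fun i _ => sum_nonneg fun j _ => by
    split_ifs
    · exact Ip_nonneg hp0 hp1 (hg.1 i j).1 (hg.1 i j).2
    · exact le_rfl

theorem phiDisc_nonneg (n : ℕ) {p : ℝ} (hp0 : 0 < p) (hp1 : p < 1) (δ : ℝ) :
    0 ≤ phiDisc n p δ :=
  Real.sInf_nonneg fun _ ⟨_, hg, _, hr⟩ => hr ▸ entG_nonneg hp0 hp1 hg

theorem phiDisc_le_entG {n : ℕ} {p δ : ℝ} (hp0 : 0 < p) (hp1 : p < 1) {g : Fin n → Fin n → ℝ}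
    (hg : IsWGraph g) (ht : (1 + δ) * p ^ 3 ≤ triDen g) : phiDisc n p δ ≤ entG p g :=
  csInf_le ⟨0, fun _ ⟨_, hg', _, hr⟩ => hr ▸ entG_nonneg hp0 hp1 hg'⟩ ⟨g, hg, ht, rfl⟩

theorem le_triDen_of_le_sum {n : ℕ} (hn : 0 < n) {g : Fin n → Fin n → ℝ} {a : ℝ}
    (h : a * n ^ 3 ≤ ∑ i, ∑ j, ∑ k, g i j * g j k * g i k) : a ≤ triDen g := by
  rwa [triDen, le_inv_mul_iff₀ (by positivity), mul_comm]

theorem phiDisc_le_of_clique {n m : ℕ} {p δ : ℝ} (hn : 0 < n) (hmn : m ≤ n) (hp0 : 0 < p)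
    (hp1 : p < 1)
    (h : (1 + δ) * p ^ 3 * n ^ 3
      ≤ p ^ 3 * (n * (n - 1) * (n - 2)) + (1 - p ^ 3) * (m * (m - 1) * (m - 2))) :
    phiDisc n p δ ≤ Real.log (1 / p) / 2 * m ^ 2 := by
  obtain ⟨S, -, hS⟩ := exists_subset_card_eq (s := (univ : Finset (Fin n))) (n := m)
    (by simpa using hmn)
  have hfilter : univ.filter (fun x : Fin n × Fin n => x.1 ∈ S ∧ x.2 ∈ S) = S ×ˢ S := by
    ext; simp
  have hsymm : ∀ i j : Fin n, i ∈ S ∧ j ∈ S → j ∈ S ∧ i ∈ S := fun _ _ => And.symm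
  calc phiDisc n p δ ≤ entG p (plantedClique S p) := by
        refine phiDisc_le_entG hp0 hp1 (isWGraph_planted hsymm hp0.le hp1.le)
          (le_triDen_of_le_sum hn (h.trans ?_))
        simpa [hS] using clique_triangles S hp0.le hp1.le
    _ ≤ Real.log (1 / p) / 2 * m ^ 2 :=
        (entG_planted_le hsymm hp0 hp1).trans_eq (by simp [hfilter, hS, sq])

theorem phiDisc_le_of_hub {n m : ℕ} {p δ : ℝ} (hn : 0 < n) (hmn : m ≤ n) (hp0 : 0 < p)
    (hp1 : p < 1)
    (h : (1 + δ) * p ^ 3 * n ^ 3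
      ≤ p ^ 3 * (n * (n - 1) * (n - 2)) + 3 * (p - p ^ 3) * (m * (n - m) * (n - m - 1))) :
    phiDisc n p δ ≤ Real.log (1 / p) / 2 * (2 * m * n) := by
  obtain ⟨S, -, hS⟩ := exists_subset_card_eq (s := (univ : Finset (Fin n))) (n := m)
    (by simpa using hmn)
  have hSc : (#Sᶜ : ℝ) = n - m := by
    rw [card_compl, Fintype.card_fin, hS, Nat.cast_sub hmn]
  have hfilter : univ.filter (fun x : Fin n × Fin n => x.1 ∈ S ∨ x.2 ∈ S)
      ⊆ S ×ˢ univ ∪ univ ×ˢ S := by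
    intro x
    simp
  have hcard : (#(univ.filter fun x : Fin n × Fin n => x.1 ∈ S ∨ x.2 ∈ S) : ℝ)
      ≤ 2 * m * n := by
    have := (card_le_card hfilter).trans (card_union_le _ _)
    simp only [card_product, card_univ, Fintype.card_fin, hS] at this
    calc (_ : ℝ) ≤ (m * n + n * m : ℕ) := by exact_mod_cast this
      _ = 2 * m * n := by push_cast; ring
  have hsymm : ∀ i j : Fin n, i ∈ S ∨ j ∈ S → j ∈ S ∨ i ∈ S := fun _ _ => Or.symm
  have hL : 0 ≤ Real.log (1 / p) := Real.log_nonneg (by rw [le_div_iff₀ hp0]; linarith)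
  calc phiDisc n p δ ≤ entG p (plantedHub S p) := by
        refine phiDisc_le_entG hp0 hp1 (isWGraph_planted hsymm hp0.le hp1.le)
          (le_triDen_of_le_sum hn (h.trans ?_))
        simpa [hS, hSc] using hub_triangles S hp0.le hp1.le
    _ ≤ Real.log (1 / p) / 2 * (2 * m * n) :=
        (entG_planted_le hsymm hp0 hp1).trans (by gcongr)

theorem phiDisc_div_le_of_clique {n : ℕ} {p δ c b : ℝ} (hn : 0 < n) (hp0 : 0 < p)
    (hp1 : p < 1) (hc : 0 ≤ c)
    (hfeas : 1 + δ ≤ (1 - 1 / n) * (1 - 2 / n) + (1 - p ^ 3) * c ^ 3)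
    (hsize : c * p + 3 / n ≤ 1) (hent : (c + 3 / (n * p)) ^ 2 ≤ 2 * b) :
    phiDisc n p δ / (n ^ 2 * p ^ 2 * Real.log (1 / p)) ≤ b := by
  have hn' : (0 : ℝ) < n := Nat.cast_pos.2 hn
  have hL : 0 < Real.log (1 / p) := Real.log_pos (by rw [lt_div_iff₀ hp0]; linarith)
  set x := c * p * n
  have hx : 0 ≤ x := by positivity
  -- the `+ 2` makes even `m - 2` at least `x`, so the clique has at least `x³` triangles
  set m := ⌈x⌉₊ + 2
  have hm_ge : x + 2 ≤ m := by push_cast [m]; linarith [Nat.le_ceil x]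
  have hm_le : (m : ℝ) ≤ x + 3 := by push_cast [m]; linarith [Nat.ceil_lt_add_one hx]
  have hmn : m ≤ n := by
    have : x + 3 ≤ n := by
      have := mul_le_mul_of_nonneg_right hsize hn'.le
      rw [add_mul, div_mul_cancel₀ _ hn'.ne'] at this
      linarith
    exact_mod_cast hm_le.trans this
  have hcube : x ^ 3 ≤ m * (m - 1) * (m - 2) := by
    calc x ^ 3 = x * x * x := by ring
      _ ≤ _ := by gcongr <;> nlinarith
  have hphi := phiDisc_le_of_clique (δ := δ) hn hmn hp0 hp1 (by
    have h1p : 0 ≤ 1 - p ^ 3 := by nlinarith [pow_le_one₀ hp0.le hp1.le (n := 3)]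
    calc (1 + δ) * p ^ 3 * n ^ 3
        ≤ ((1 - 1 / n) * (1 - 2 / n) + (1 - p ^ 3) * c ^ 3) * p ^ 3 * n ^ 3 := by gcongr
      _ = p ^ 3 * (n * (n - 1) * (n - 2)) + (1 - p ^ 3) * x ^ 3 := by field_simp; ring
      _ ≤ _ := by gcongr)
  rw [div_le_iff₀ (by positivity)]
  calc phiDisc n p δ ≤ Real.log (1 / p) / 2 * m ^ 2 := hphi
    _ ≤ Real.log (1 / p) / 2 * (n * p * (c + 3 / (n * p))) ^ 2 := by
        gcongr
        calc (m : ℝ) ≤ x + 3 := hm_le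
          _ = n * p * (c + 3 / (n * p)) := by field_simp; ring
    _ ≤ Real.log (1 / p) / 2 * ((n * p) ^ 2 * (2 * b)) := by rw [mul_pow]; gcongr
    _ = b * (n ^ 2 * p ^ 2 * Real.log (1 / p)) := by ring

theorem phiDisc_div_le_of_hub {n : ℕ} {p δ c b : ℝ} (hn : 0 < n) (hp0 : 0 < p) (hp1 : p < 1)
    (hc : 0 ≤ c)
    (hfeas : 1 + δ ≤ (1 - 1 / n) * (1 - 2 / n)
      + 3 * (1 - p ^ 2) * c * (1 - c * p ^ 2 - 1 / n) * (1 - c * p ^ 2 - 2 / n))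
    (hsize : c * p ^ 2 + 2 / n ≤ 1) (hent : c + 1 / (n * p ^ 2) ≤ b) :
    phiDisc n p δ / (n ^ 2 * p ^ 2 * Real.log (1 / p)) ≤ b := by
  have hn' : (0 : ℝ) < n := Nat.cast_pos.2 hn
  have hL : 0 < Real.log (1 / p) := Real.log_pos (by rw [lt_div_iff₀ hp0]; linarith)
  set x := c * p ^ 2 * n
  have hx : 0 ≤ x := by positivity
  have hxn : x + 2 ≤ n := by
    have := mul_le_mul_of_nonneg_right hsize hn'.le
    rw [add_mul, div_mul_cancel₀ _ hn'.ne'] at this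
    linarith
  set m := ⌈x⌉₊
  have hm_ge : x ≤ m := Nat.le_ceil x
  have hm_le : (m : ℝ) ≤ x + 1 := (Nat.ceil_lt_add_one hx).le
  have hmn : m ≤ n := by exact_mod_cast (hm_le.trans (by linarith) : (m : ℝ) ≤ n)
  have hphi := phiDisc_le_of_hub (δ := δ) hn hmn hp0 hp1 (by
    calc (1 + δ) * p ^ 3 * n ^ 3
        ≤ ((1 - 1 / n) * (1 - 2 / n)
          + 3 * (1 - p ^ 2) * c * (1 - c * p ^ 2 - 1 / n) * (1 - c * p ^ 2 - 2 / n))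
          * p ^ 3 * n ^ 3 := by gcongr
      _ = p ^ 3 * (n * (n - 1) * (n - 2))
          + 3 * (p - p ^ 3) * (x * (n - x - 1) * (n - x - 2)) := by field_simp; ring
      _ ≤ _ := by
        have : 0 ≤ p - p ^ 3 := by nlinarith
        gcongr _ + 3 * (p - p ^ 3) * (?_ * ?_ * ?_) <;> nlinarith)
  rw [div_le_iff₀ (by positivity)]
  calc phiDisc n p δ ≤ Real.log (1 / p) / 2 * (2 * m * n) := hphi
    _ ≤ Real.log (1 / p) / 2 * (2 * (n * p ^ 2 * (c + 1 / (n * p ^ 2))) * n) := by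
        gcongr
        calc (m : ℝ) ≤ x + 1 := hm_le
          _ = n * p ^ 2 * (c + 1 / (n * p ^ 2)) := by field_simp; ring
    _ ≤ Real.log (1 / p) / 2 * (2 * (n * p ^ 2 * b) * n) := by gcongr
    _ = b * (n ^ 2 * p ^ 2 * Real.log (1 / p)) := by ring

theorem limsup_le_of_forall_lt_eventually_le {α : Type*} {l : Filter α} [l.NeBot]
    {f : α → ℝ} (hf : ∀ n, 0 ≤ f n) {L : ℝ} (h : ∀ b, L < b → ∀ᶠ n in l, f n ≤ b) :
    limsup f l ≤ L :=
  le_of_forall_gt_imp_ge_of_dense fun b hb =>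
    limsup_le_of_le (isCoboundedUnder_le_of_le l hf) (h b hb)

theorem exists_cube_gt_sq_lt {δ b : ℝ} (hδ : 0 < δ) (hb : δ ^ ((2 : ℝ) / 3) / 2 < b) :
    ∃ c, 0 ≤ c ∧ δ < c ^ 3 ∧ c ^ 2 < 2 * b := by
  set d := δ ^ ((1 : ℝ) / 3)
  have hd : 0 ≤ d := by positivity
  have hd_pow : ∀ k : ℕ, d ^ k = δ ^ ((k : ℝ) / 3) := fun k => by
    rw [← Real.rpow_natCast, ← Real.rpow_mul hδ.le]
    ring_nf
  obtain ⟨c, hdc, hcb⟩ :=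
    exists_between ((Real.lt_sqrt (y := 2 * b) hd).2 (by rw [hd_pow 2]; push_cast; linarith))
  refine ⟨c, hd.trans hdc.le, ?_, (Real.lt_sqrt (hd.trans hdc.le)).1 hcb⟩
  calc δ = d ^ 3 := by rw [hd_pow 3]; norm_num
    _ < c ^ 3 := by gcongr

theorem tendsto_one_sub_one_div_mul_one_sub_two_div :
    Tendsto (fun n : ℕ => (1 - 1 / (n : ℝ)) * (1 - 2 / n)) atTop (nhds 1) := by
  simpa using ((tendsto_const_div_atTop_nhds_zero_nat (𝕜 := ℝ) 1).const_sub 1).mul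
    ((tendsto_const_div_atTop_nhds_zero_nat (𝕜 := ℝ) 2).const_sub 1)

theorem eventually_phiDisc_div_le_of_clique {δ : ℝ} (hδ : 0 < δ) {p : ℕ → ℝ}
    (hp : ∀ n, 0 < p n ∧ p n < 1) (hp0 : Tendsto p atTop (nhds 0))
    (hnp : Tendsto (fun n : ℕ => (n : ℝ) * p n) atTop atTop) {b : ℝ}
    (hb : δ ^ ((2 : ℝ) / 3) / 2 < b) :
    ∀ᶠ n in atTop, phiDisc n (p n) δ / ((n : ℝ) ^ 2 * p n ^ 2 * Real.log (1 / p n)) ≤ b := by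
  obtain ⟨c, hc, hδc, hcb⟩ := exists_cube_gt_sq_lt hδ hb
  have hfeas : Tendsto (fun n : ℕ => (1 - 1 / (n : ℝ)) * (1 - 2 / n) + (1 - p n ^ 3) * c ^ 3)
      atTop (nhds (1 + c ^ 3)) := by
    simpa using tendsto_one_sub_one_div_mul_one_sub_two_div.add
      (((hp0.pow 3).const_sub 1).mul_const (c ^ 3))
  have hsize : Tendsto (fun n : ℕ => c * p n + 3 / (n : ℝ)) atTop (nhds 0) := by
    simpa using (hp0.const_mul c).add (tendsto_const_div_atTop_nhds_zero_nat 3)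
  have hent : Tendsto (fun n : ℕ => (c + 3 / (n * p n)) ^ 2) atTop (nhds (c ^ 2)) := by
    simpa [div_eq_mul_inv] using ((hnp.inv_tendsto_atTop.const_mul 3).const_add c).pow 2
  filter_upwards [eventually_gt_atTop 0,
    hfeas.eventually_const_le (by linarith : 1 + δ < 1 + c ^ 3),
    hsize.eventually_le_const zero_lt_one, hent.eventually_le_const hcb] with n hn h1 h2 h3
  exact phiDisc_div_le_of_clique hn (hp n).1 (hp n).2 hc h1 h2 h3

theorem eventually_phiDisc_div_le_of_hub {δ : ℝ} (hδ : 0 < δ) {p : ℕ → ℝ}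
    (hp : ∀ n, 0 < p n ∧ p n < 1) (hp0 : Tendsto p atTop (nhds 0))
    (hnp2 : Tendsto (fun n : ℕ => (n : ℝ) * p n ^ 2) atTop atTop) {b : ℝ} (hb : δ / 3 < b) :
    ∀ᶠ n in atTop, phiDisc n (p n) δ / ((n : ℝ) ^ 2 * p n ^ 2 * Real.log (1 / p n)) ≤ b := by
  obtain ⟨c, hδc, hcb⟩ := exists_between hb
  have hc : 0 ≤ c := by linarith
  have hp2 : Tendsto (fun n => p n ^ 2) atTop (nhds 0) := by simpa using hp0.pow 2
  have h1n := tendsto_const_div_atTop_nhds_zero_nat (𝕜 := ℝ) 1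
  have h2n := tendsto_const_div_atTop_nhds_zero_nat (𝕜 := ℝ) 2
  have hfeas : Tendsto (fun n : ℕ => (1 - 1 / (n : ℝ)) * (1 - 2 / n)
      + 3 * (1 - p n ^ 2) * c * (1 - c * p n ^ 2 - 1 / n) * (1 - c * p n ^ 2 - 2 / n))
      atTop (nhds (1 + 3 * c)) := by
    simpa using tendsto_one_sub_one_div_mul_one_sub_two_div.add
      (((((hp2.const_sub 1).const_mul 3).mul_const c).mul
        (((hp2.const_mul c).const_sub 1).sub h1n)).mul
          (((hp2.const_mul c).const_sub 1).sub h2n))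
  have hsize : Tendsto (fun n : ℕ => c * p n ^ 2 + 2 / (n : ℝ)) atTop (nhds 0) := by
    simpa using (hp2.const_mul c).add h2n
  have hent : Tendsto (fun n : ℕ => c + 1 / (n * p n ^ 2)) atTop (nhds c) := by
    simpa using hnp2.inv_tendsto_atTop.const_add c
  filter_upwards [eventually_gt_atTop 0,
    hfeas.eventually_const_le (by linarith : 1 + δ < 1 + 3 * c),
    hsize.eventually_le_const zero_lt_one, hent.eventually_le_const hcb] with n hn h1 h2 h3
  exact phiDisc_div_le_of_hub hn (hp n).1 (hp n).2 hc h1 h2 h3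

/-- Upper bounds on the discrete variational problem. (i) If `p(n) → 0` and
`n·p(n) → ∞`, then `limsup φ(n,p(n),δ)/(n²p(n)²log(1/p(n))) ≤ δ^{2/3}/2`. (ii) If moreover
`n·p(n)² → ∞`, then the limsup is at most `min{δ^{2/3}/2, δ/3}`. -/
theorem discrete_variational_problem_upper_bounds
    (δ : ℝ) (hδ : 0 < δ) (p : ℕ → ℝ) (hp : ∀ n, 0 < p n ∧ p n < 1)
    (hp0 : Tendsto p atTop (nhds 0))
    (hnp : Tendsto (fun n : ℕ => (n : ℝ) * p n) atTop atTop) :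
    limsup
        (fun n : ℕ => phiDisc n (p n) δ / ((n : ℝ) ^ 2 * (p n) ^ 2 * Real.log (1 / p n)))
        atTop ≤ δ ^ ((2 : ℝ) / 3) / 2
      ∧ (Tendsto (fun n : ℕ => (n : ℝ) * (p n) ^ 2) atTop atTop →
          limsup
            (fun n : ℕ => phiDisc n (p n) δ / ((n : ℝ) ^ 2 * (p n) ^ 2 * Real.log (1 / p n)))
            atTop ≤ min (δ ^ ((2 : ℝ) / 3) / 2) (δ / 3)) := by
  have hratio : ∀ n : ℕ,
      0 ≤ phiDisc n (p n) δ / ((n : ℝ) ^ 2 * (p n) ^ 2 * Real.log (1 / p n)) := fun n =>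
    div_nonneg (phiDisc_nonneg n (hp n).1 (hp n).2 δ)
      (mul_nonneg (by positivity) (Real.log_nonneg (one_le_one_div (hp n).1 (hp n).2.le)))
  have hclique := limsup_le_of_forall_lt_eventually_le hratio fun _ hb =>
    eventually_phiDisc_div_le_of_clique hδ hp hp0 hnp hb
  exact ⟨hclique, fun hnp2 => le_min hclique <| limsup_le_of_forall_lt_eventually_le hratio
    fun _ hb => eventually_phiDisc_div_le_of_hub hδ hp hp0 hnp2 hb⟩
end

section
/- For every ε > 0 there exists p₀ > 0 such that for all 0 < p ≤ p₀ and every symmetric measurable function U : [0,1]² → ℝ with 0 ≤ U(x,y) ≤ 1−p for all (x,y), one has E[I_p(p+U)] ≥ (1−ε) · I_p(1) · t(U)^{2/3}, where I_p(1) = log(1/p). -/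
/-!
Write `L = log (1/p)`, `c = (1 - δ) L` and `v = p + u`. The second term of `I_p(p + u)` is at
least `-u`, so it suffices to show `v log (v/p) - u ≥ c u²`. If `2cv ≤ 1`, the Taylor bound
`-log (1 - s) ≥ s + s²/2` at `s = u/v` gives `v log (v/p) - u ≥ u²/(2v) ≥ c u²`. If `2cv > 1`,
then `log v ≥ -log (2c)`, so `v log (v/p) - u ≥ v (L - 1 - log (2c)) ≥ c v ≥ c u²` as soon as
`c + 1 + log (2c) ≤ L`, which holds for small `p` because `log L = o(δ L)`.

Cauchy–Schwarz in `z` bounds the codegree `∫ U(x,z) U(y,z) dz` by `√(d(x) d(y))` with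
`d(x) = ∫ U(x,y)² dy`, and Cauchy–Schwarz in `y` then gives `t(U) ≤ (∫∫ U²)^{3/2}`.
Integrating the pointwise bound `I_p(p + U) ≥ c U²` finishes the proof.
-/

open Real Filter

/-- Triangle density `t(U) = ∫_{[0,1]³} U(x,y) U(x,z) U(y,z) dx dy dz`. -/
noncomputable def triW (U : ℝ → ℝ → ℝ) : ℝ :=
  ∫ x in Set.Icc (0 : ℝ) 1, ∫ y in Set.Icc (0 : ℝ) 1, ∫ z in Set.Icc (0 : ℝ) 1,
    U x y * U x z * U y z

/-- `E[I_p(p+U)] = ∫_{[0,1]²} I_p(p + U(x,y)) dx dy`. -/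
noncomputable def entShift (p : ℝ) (U : ℝ → ℝ → ℝ) : ℝ :=
  ∫ x in Set.Icc (0 : ℝ) 1, ∫ y in Set.Icc (0 : ℝ) 1, Ip p (p + U x y)

open MeasureTheory

lemma add_sq_div_two_le_neg_log_one_sub {s : ℝ} (h0 : 0 ≤ s) (h1 : s < 1) :
    s + s ^ 2 / 2 ≤ -log (1 - s) := by
  have h := sum_le_hasSum (Finset.range 2) (fun n _ => by positivity)
    (hasSum_pow_div_log_of_abs_lt_one (by rwa [abs_of_nonneg h0]))
  norm_num [Finset.sum_range_succ] at h
  linarith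

lemma sub_le_mul_log_div {a b : ℝ} (ha : 0 < a) (hb : 0 ≤ b) : b - a ≤ b * log (b / a) := by
  rcases hb.eq_or_lt with rfl | hb
  · simpa using ha.le
  · have h := one_sub_inv_le_log_of_pos (div_pos hb ha)
    rw [inv_div] at h
    calc b - a = b * (1 - a / b) := by field_simp
      _ ≤ b * log (b / a) := mul_le_mul_of_nonneg_left h hb.le

lemma add_sq_div_le_mul_log_div {p u : ℝ} (hp : 0 < p) (hu : 0 ≤ u) :
    u + u ^ 2 / (2 * (p + u)) ≤ (p + u) * log ((p + u) / p) := by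
  have hv : 0 < p + u := by linarith
  have h := add_sq_div_two_le_neg_log_one_sub (s := u / (p + u)) (by positivity)
    ((div_lt_one hv).2 (by linarith))
  rw [show 1 - u / (p + u) = p / (p + u) by field_simp; ring, ← log_inv, inv_div] at h
  calc u + u ^ 2 / (2 * (p + u)) = (p + u) * (u / (p + u) + (u / (p + u)) ^ 2 / 2) := by
        field_simp
    _ ≤ (p + u) * log ((p + u) / p) := mul_le_mul_of_nonneg_left h hv.le

lemma mul_log_div_sub_le_Ip {p u : ℝ} (hp1 : p < 1) (hu1 : u ≤ 1 - p) :
    (p + u) * log ((p + u) / p) - u ≤ Ip p (p + u) := by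
  have h := sub_le_mul_log_div (a := 1 - p) (b := 1 - (p + u)) (by linarith) (by linarith)
  unfold Ip
  linarith

lemma mul_sq_le_Ip {p u c : ℝ} (hp : 0 < p) (hp1 : p < 1) (hu : 0 ≤ u) (hu1 : u ≤ 1 - p)
    (hc : 0 ≤ c) (hcL : c + 1 + log (2 * c) ≤ log (1 / p)) :
    c * u ^ 2 ≤ Ip p (p + u) := by
  refine le_trans ?_ (mul_log_div_sub_le_Ip hp1 hu1)
  set v := p + u
  have hv : 0 < v := by positivity
  rcases le_or_gt (2 * c * v) 1 with hsmall | hlarge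
  · have h := add_sq_div_le_mul_log_div hp hu
    have : c * u ^ 2 ≤ u ^ 2 / (2 * v) := by
      rw [le_div_iff₀ (by positivity)]
      nlinarith [sq_nonneg u]
    linarith
  · have hc0 : 0 < c := by
      by_contra! h
      nlinarith
    have hlogv : -log (2 * c) ≤ log v := by
      rw [← log_inv]
      exact log_le_log (by positivity) ((inv_le_iff_one_le_mul₀' (by positivity)).2 hlarge.le)
    have hsplit : log (v / p) = log v + log (1 / p) := by
      rw [log_div hv.ne' hp.ne', one_div, log_inv]; ring
    have hu2 : u ^ 2 ≤ v := by nlinarith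
    calc c * u ^ 2 ≤ v * c := by nlinarith
      _ ≤ v * (log v + log (1 / p) - 1) := by gcongr; linarith
      _ = v * log (v / p) - v := by rw [hsplit]; ring
      _ ≤ v * log (v / p) - u := by linarith

lemma Ip_le_log_one_div {p u : ℝ} (hp : 0 < p) (hu : 0 ≤ u) (hu1 : u ≤ 1 - p) :
    Ip p (p + u) ≤ log (1 / p) := by
  have hv : 0 < p + u := by linarith
  have hlog : 0 ≤ log ((p + u) / p) := log_nonneg ((le_div_iff₀ hp).2 (by linarith))
  have h1 : (p + u) * log ((p + u) / p) ≤ log (1 / p) :=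
    calc (p + u) * log ((p + u) / p) ≤ 1 * log ((p + u) / p) := by gcongr; linarith
      _ ≤ log (1 / p) := by rw [one_mul]; gcongr; linarith
  have h2 : (1 - (p + u)) * log ((1 - (p + u)) / (1 - p)) ≤ 0 :=
    mul_nonpos_of_nonneg_of_nonpos (by linarith)
      (log_nonpos (by apply div_nonneg <;> linarith)
        (div_le_one_of_le₀ (by linarith) (by linarith)))
  unfold Ip
  linarith

lemma measurable_Ip (p : ℝ) : Measurable (Ip p) := by
  unfold Ip; fun_prop

section TriangleDensity

variable {α : Type*} [MeasurableSpace α] {μ : Measure α}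

lemma ae_prod_restrict_of_forall_mem [SFinite μ] {s : Set α} (hs : MeasurableSet s)
    {P : α → α → Prop} (h : ∀ x ∈ s, ∀ y ∈ s, P x y) :
    ∀ᵐ q ∂(μ.restrict s).prod (μ.restrict s), P q.1 q.2 := by
  rw [Measure.prod_restrict]
  exact ae_restrict_of_forall_mem (hs.prod hs) fun q hq => h _ hq.1 _ hq.2

theorem integral_mul_le_sqrt_mul_sqrt {f g : α → ℝ} (hf : 0 ≤ᵐ[μ] f) (hg : 0 ≤ᵐ[μ] g)
    (hf2 : MemLp f 2 μ) (hg2 : MemLp g 2 μ) :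
    ∫ a, f a * g a ∂μ ≤ √(∫ a, f a ^ 2 ∂μ) * √(∫ a, g a ^ 2 ∂μ) := by
  have h := integral_mul_le_Lp_mul_Lq_of_nonneg Real.HolderConjugate.two_two hf hg
    (by simpa using hf2) (by simpa using hg2)
  simpa only [rpow_two, ← sqrt_eq_rpow] using h

lemma integral_integral_mono_of_nonneg [SFinite μ] {β : Type*} [MeasurableSpace β] {ν : Measure β}
    [SFinite ν] {F G : α → β → ℝ}
    (hFG : ∀ᵐ q ∂μ.prod ν, 0 ≤ F q.1 q.2 ∧ F q.1 q.2 ≤ G q.1 q.2)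
    (hG : Integrable (Function.uncurry G) (μ.prod ν)) :
    ∫ x, ∫ y, F x y ∂ν ∂μ ≤ ∫ x, ∫ y, G x y ∂ν ∂μ := by
  have hFG' := Measure.ae_ae_of_ae_prod hFG
  refine integral_mono_of_nonneg ?_ hG.integral_prod_left ?_
  · filter_upwards [hFG'] with x hx
    exact integral_nonneg_of_ae (hx.mono fun _ hy => hy.1)
  · filter_upwards [hFG', hG.prod_right_ae] with x hx hGx
    exact integral_mono_of_nonneg (hx.mono fun _ hy => hy.1) hGx (hx.mono fun _ hy => hy.2)

variable [IsFiniteMeasure μ]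

lemma memLp_of_ae_mem_Icc {f : α → ℝ} (hf : AEStronglyMeasurable f μ) {C : ℝ}
    (h : ∀ᵐ a ∂μ, f a ∈ Set.Icc 0 C) {p : ENNReal} : MemLp f p μ :=
  .of_bound hf C (h.mono fun _ ha => by rw [norm_of_nonneg ha.1]; exact ha.2)

variable {U : α → α → ℝ}

lemma integral_triangle_nonneg (hU01 : ∀ᵐ q ∂μ.prod μ, Function.uncurry U q ∈ Set.Icc 0 1) :
    0 ≤ ∫ x, ∫ y, ∫ z, U x y * U x z * U y z ∂μ ∂μ ∂μ := by
  have hUx : ∀ᵐ x ∂μ, ∀ᵐ y ∂μ, U x y ∈ Set.Icc 0 1 := Measure.ae_ae_of_ae_prod hU01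
  refine integral_nonneg_of_ae ?_
  filter_upwards [hUx] with x hx
  refine integral_nonneg_of_ae ?_
  filter_upwards [hUx, hx] with y hy hxy
  refine integral_nonneg_of_ae ?_
  filter_upwards [hx, hy] with z hxz hyz
  exact mul_nonneg (mul_nonneg hxy.1 hxz.1) hyz.1

lemma ae_memLp_two (hU : Measurable (Function.uncurry U))
    (hU01 : ∀ᵐ q ∂μ.prod μ, Function.uncurry U q ∈ Set.Icc 0 1) :
    ∀ᵐ x ∂μ, MemLp (U x) 2 μ :=
  (Measure.ae_ae_of_ae_prod hU01).mono fun _ hx =>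
    memLp_of_ae_mem_Icc (hU.comp measurable_prodMk_left).aestronglyMeasurable hx

lemma ae_ae_integral_mul_le_sqrt_mul_sqrt (hU : Measurable (Function.uncurry U))
    (hU01 : ∀ᵐ q ∂μ.prod μ, Function.uncurry U q ∈ Set.Icc 0 1) :
    ∀ᵐ x ∂μ, ∀ᵐ y ∂μ, 0 ≤ ∫ z, U x z * U y z ∂μ ∧
      ∫ z, U x z * U y z ∂μ ≤ √(∫ z, U x z ^ 2 ∂μ) * √(∫ z, U y z ^ 2 ∂μ) := by
  have hUx : ∀ᵐ x ∂μ, ∀ᵐ y ∂μ, U x y ∈ Set.Icc 0 1 := Measure.ae_ae_of_ae_prod hU01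
  filter_upwards [hUx, ae_memLp_two hU hU01] with x hx hxL
  filter_upwards [hUx, ae_memLp_two hU hU01] with y hy hyL
  refine ⟨integral_nonneg_of_ae ?_,
    integral_mul_le_sqrt_mul_sqrt (hx.mono fun _ h => h.1) (hy.mono fun _ h => h.1) hxL hyL⟩
  filter_upwards [hx, hy] with z hxz hyz using mul_nonneg hxz.1 hyz.1

theorem integral_triangle_le (hU : Measurable (Function.uncurry U))
    (hU01 : ∀ᵐ q ∂μ.prod μ, Function.uncurry U q ∈ Set.Icc 0 1) :
    ∫ x, ∫ y, ∫ z, U x y * U x z * U y z ∂μ ∂μ ∂μ ≤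
      √(∫ x, ∫ y, U x y ^ 2 ∂μ ∂μ) * ∫ x, ∫ y, U x y ^ 2 ∂μ ∂μ := by
  set g : α → ℝ := fun x => ∫ y, U x y ^ 2 ∂μ
  set S := ∫ x, g x ∂μ
  have hUx : ∀ᵐ x ∂μ, ∀ᵐ y ∂μ, U x y ∈ Set.Icc 0 1 := Measure.ae_ae_of_ae_prod hU01
  have hK := ae_ae_integral_mul_le_sqrt_mul_sqrt hU hU01
  have hg0 : ∀ x, 0 ≤ g x := fun x => integral_nonneg fun y => sq_nonneg _
  have hg : Integrable g μ := by
    refine (Integrable.of_bound (hU.pow_const 2).aestronglyMeasurable 1 ?_).integral_prod_left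
    filter_upwards [hU01] with q hq
    rw [norm_pow, norm_of_nonneg hq.1]
    exact pow_le_one₀ hq.1 hq.2
  have hgL : MemLp (fun x => √(g x)) 2 μ := by
    rw [memLp_two_iff_integrable_sq (continuous_sqrt.comp_aestronglyMeasurable hg.1)]
    simpa only [sq_sqrt (hg0 _)] using hg
  have hgS : ∫ y, √(g y) ^ 2 ∂μ = S := integral_congr_ae (ae_of_all _ fun y => sq_sqrt (hg0 y))
  have hrow : ∀ᵐ x ∂μ, ∫ y, U x y * ∫ z, U x z * U y z ∂μ ∂μ ≤ √S * g x := by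
    filter_upwards [hUx, ae_memLp_two hU hU01, hK] with x hx hxL hKx
    calc ∫ y, U x y * ∫ z, U x z * U y z ∂μ ∂μ ≤ ∫ y, √(g x) * (U x y * √(g y)) ∂μ := by
          refine integral_mono_of_nonneg ?_ ((hxL.integrable_mul hgL).const_mul _) ?_
          · filter_upwards [hx, hKx] with y hy hKy using mul_nonneg hy.1 hKy.1
          · filter_upwards [hx, hKx] with y hy hKy
            calc _ ≤ U x y * (√(g x) * √(g y)) := mul_le_mul_of_nonneg_left hKy.2 hy.1
              _ = _ := by ring
      _ = √(g x) * ∫ y, U x y * √(g y) ∂μ := integral_const_mul _ _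
      _ ≤ √(g x) * (√(g x) * √S) := by
          gcongr
          exact (integral_mul_le_sqrt_mul_sqrt (hx.mono fun _ h => h.1)
            (ae_of_all _ fun _ => sqrt_nonneg _) hxL hgL).trans_eq (by rw [hgS])
      _ = √S * g x := by rw [← mul_assoc, mul_self_sqrt (hg0 x)]; ring
  calc ∫ x, ∫ y, ∫ z, U x y * U x z * U y z ∂μ ∂μ ∂μ
      = ∫ x, ∫ y, U x y * ∫ z, U x z * U y z ∂μ ∂μ ∂μ := by
        simp_rw [mul_assoc, integral_const_mul]
    _ ≤ ∫ x, √S * g x ∂μ := by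
        refine integral_mono_of_nonneg ?_ (hg.const_mul _) hrow
        filter_upwards [hUx, hK] with x hx hKx
        refine integral_nonneg_of_ae ?_
        filter_upwards [hx, hKx] with y hy hKy using mul_nonneg hy.1 hKy.1
    _ = √S * S := integral_const_mul _ _

theorem integral_triangle_rpow_le (hU : Measurable (Function.uncurry U))
    (hU01 : ∀ᵐ q ∂μ.prod μ, Function.uncurry U q ∈ Set.Icc 0 1) :
    (∫ x, ∫ y, ∫ z, U x y * U x z * U y z ∂μ ∂μ ∂μ) ^ ((2 : ℝ) / 3) ≤
      ∫ x, ∫ y, U x y ^ 2 ∂μ ∂μ := by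
  have hS : 0 ≤ ∫ x, ∫ y, U x y ^ 2 ∂μ ∂μ :=
    integral_nonneg fun x => integral_nonneg fun y => sq_nonneg _
  rw [show (2 : ℝ) / 3 = (3 / 2)⁻¹ by norm_num,
    rpow_inv_le_iff_of_pos (integral_triangle_nonneg hU01) hS (by norm_num),
    show (3 : ℝ) / 2 = 1 / 2 + 1 by norm_num, rpow_add' hS (by norm_num), rpow_one,
    ← sqrt_eq_rpow]
  exact integral_triangle_le hU hU01

end TriangleDensity

lemma triW_nonneg {U : ℝ → ℝ → ℝ}
    (hU01 : ∀ x ∈ Set.Icc (0 : ℝ) 1, ∀ y ∈ Set.Icc (0 : ℝ) 1, U x y ∈ Set.Icc 0 1) :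
    0 ≤ triW U :=
  integral_triangle_nonneg (ae_prod_restrict_of_forall_mem measurableSet_Icc hU01)

lemma triW_rpow_le {U : ℝ → ℝ → ℝ} (hU : Measurable (Function.uncurry U))
    (hU01 : ∀ x ∈ Set.Icc (0 : ℝ) 1, ∀ y ∈ Set.Icc (0 : ℝ) 1, U x y ∈ Set.Icc 0 1) :
    triW U ^ ((2 : ℝ) / 3) ≤ ∫ x in Set.Icc (0 : ℝ) 1, ∫ y in Set.Icc (0 : ℝ) 1, U x y ^ 2 :=
  integral_triangle_rpow_le hU (ae_prod_restrict_of_forall_mem measurableSet_Icc hU01)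

lemma mul_integral_sq_le_entShift {p c : ℝ} (hp : 0 < p) (hp1 : p < 1) (hc : 0 ≤ c)
    (hcL : c + 1 + log (2 * c) ≤ log (1 / p)) {U : ℝ → ℝ → ℝ}
    (hU : Measurable (Function.uncurry U))
    (hUp : ∀ x ∈ Set.Icc (0 : ℝ) 1, ∀ y ∈ Set.Icc (0 : ℝ) 1, 0 ≤ U x y ∧ U x y ≤ 1 - p) :
    c * ∫ x in Set.Icc (0 : ℝ) 1, ∫ y in Set.Icc (0 : ℝ) 1, U x y ^ 2 ≤ entShift p U := by
  have hUp' := ae_prod_restrict_of_forall_mem (μ := volume) measurableSet_Icc hUp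
  have hIp : ∀ᵐ q ∂(volume.restrict (Set.Icc (0 : ℝ) 1)).prod (volume.restrict (Set.Icc 0 1)),
      0 ≤ c * U q.1 q.2 ^ 2 ∧ c * U q.1 q.2 ^ 2 ≤ Ip p (p + U q.1 q.2) :=
    hUp'.mono fun q hq => ⟨by positivity, mul_sq_le_Ip hp hp1 hq.1 hq.2 hc hcL⟩
  have hIp_int : Integrable (fun q : ℝ × ℝ => Ip p (p + U q.1 q.2))
      ((volume.restrict (Set.Icc (0 : ℝ) 1)).prod (volume.restrict (Set.Icc 0 1))) := by
    refine .of_bound ((measurable_Ip p).comp (measurable_const.add hU)).aestronglyMeasurable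
      (log (1 / p)) ?_
    filter_upwards [hIp, hUp'] with q hq hq'
    rw [norm_of_nonneg (hq.1.trans hq.2)]
    exact Ip_le_log_one_div hp hq'.1 hq'.2
  calc c * ∫ x in Set.Icc (0 : ℝ) 1, ∫ y in Set.Icc (0 : ℝ) 1, U x y ^ 2
      = ∫ x in Set.Icc (0 : ℝ) 1, ∫ y in Set.Icc (0 : ℝ) 1, c * U x y ^ 2 := by
        simp_rw [integral_const_mul]
    _ ≤ entShift p U := integral_integral_mono_of_nonneg hIp hIp_int

lemma exists_forall_add_log_le {δ : ℝ} (hδ0 : 0 < δ) (hδ1 : δ < 1) :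
    ∃ p₀ > (0 : ℝ), p₀ < 1 ∧ ∀ p, 0 < p → p ≤ p₀ →
      (1 - δ) * log (1 / p) + 1 + log (2 * ((1 - δ) * log (1 / p))) ≤ log (1 / p) := by
  have hδ4 : log (δ / 4) < 0 := log_neg (by positivity) (by linarith)
  have hδ1' : 0 < 1 - δ := by linarith
  -- `log y ≤ δ y / 4 - 1 - log (δ / 4)` absorbs `log (2c)` into `δ L` once `L ≥ -2 log (δ / 4) / δ`.
  refine ⟨exp (2 * log (δ / 4) / δ), exp_pos _,
    exp_lt_one_iff.2 (div_neg_of_neg_of_pos (by linarith) hδ0), fun p hp hpp₀ => ?_⟩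
  set L := log (1 / p)
  have hL : -log (δ / 4) ≤ δ * L / 2 := by
    have h := (log_le_log hp hpp₀).trans_eq (log_exp _)
    rw [le_div_iff₀ hδ0] at h
    rw [show L = -log p by simp [L]]
    linarith
  have hL0 : 0 < L := by nlinarith
  have hlog : log (2 * ((1 - δ) * L)) ≤ δ / 4 * (2 * ((1 - δ) * L)) - 1 - log (δ / 4) := by
    have h := log_le_sub_one_of_pos (x := δ / 4 * (2 * ((1 - δ) * L))) (by positivity)
    rw [log_mul (by positivity) (by positivity)] at h
    linarith
  nlinarith

/-- For every `ε > 0` there is `p₀ > 0` such that for all `0 < p ≤ p₀` and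
every symmetric measurable `U` with `0 ≤ U ≤ 1-p` on `[0,1]²`,
`E[I_p(p+U)] ≥ (1-ε) · log(1/p) · t(U)^{2/3}`. -/
theorem entropy_lower_bound_from_triangle_density :
    ∀ ε > (0 : ℝ), ∃ p₀ > (0 : ℝ), ∀ p : ℝ, 0 < p → p ≤ p₀ →
      ∀ U : ℝ → ℝ → ℝ, Measurable (Function.uncurry U) → (∀ x y, U x y = U y x) →
        (∀ x ∈ Set.Icc (0 : ℝ) 1, ∀ y ∈ Set.Icc (0 : ℝ) 1, 0 ≤ U x y ∧ U x y ≤ 1 - p) →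
        entShift p U ≥ (1 - ε) * Real.log (1 / p) * (triW U) ^ ((2 : ℝ) / 3) := by
  intro ε hε
  set δ := min ε (1 / 2)
  have hδε : δ ≤ ε := min_le_left _ _
  have hδ0 : 0 < δ := lt_min hε (by norm_num)
  have hδ1 : δ < 1 := (min_le_right _ _).trans_lt (by norm_num)
  obtain ⟨p₀, hp₀, hp₀1, hcL⟩ := exists_forall_add_log_le hδ0 hδ1
  refine ⟨p₀, hp₀, fun p hp hpp₀ U hU _ hUp => ?_⟩
  have hp1 : p < 1 := hpp₀.trans_lt hp₀1
  have hL : 0 ≤ log (1 / p) := log_nonneg (one_le_one_div hp hp1.le)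
  have hU01 : ∀ x ∈ Set.Icc (0 : ℝ) 1, ∀ y ∈ Set.Icc (0 : ℝ) 1, U x y ∈ Set.Icc 0 1 :=
    fun x hx y hy => ⟨(hUp x hx y hy).1, (hUp x hx y hy).2.trans (by linarith)⟩
  calc (1 - ε) * log (1 / p) * triW U ^ ((2 : ℝ) / 3)
      ≤ (1 - δ) * log (1 / p) * triW U ^ ((2 : ℝ) / 3) := by
        have := rpow_nonneg (triW_nonneg hU01) ((2 : ℝ) / 3)
        gcongr
    _ ≤ (1 - δ) * log (1 / p) * ∫ x in Set.Icc (0 : ℝ) 1, ∫ y in Set.Icc (0 : ℝ) 1, U x y ^ 2 := by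
        gcongr
        exact triW_rpow_le hU hU01
    _ ≤ entShift p U :=
        mul_integral_sq_le_entShift hp hp1 (by nlinarith) (hcL p hp hpp₀) hU hUp
end

section
/- For every symmetric measurable function U : [0,1]² → [0,1], the triangle density satisfies t(U) ≤ ( ∫_{[0,1]²} U(x,y)² dx dy )^{3/2}. -/
open Real

/-!
Write `t(W) = ∫ W(x,y) K(x,y)` with the codegree `K(x,y) = ∫ W(x,z) W(y,z) dz`.
Cauchy–Schwarz in `z` gives `K(x,y)² ≤ g(x) g(y)` with `g(x) = ∫ W(x,z)² dz`, hence
`‖K‖₂² ≤ (∫ g)² = ‖W‖₂⁴`, and Cauchy–Schwarz on the product space gives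
`t(W)² ≤ ‖W‖₂² ‖K‖₂² ≤ ‖W‖₂⁶`.
-/

open MeasureTheory Function

section CauchySchwarz

variable {α : Type*} [MeasurableSpace α] {μ : Measure α}

theorem sq_integral_mul_le_integral_sq_mul_integral_sq {f g : α → ℝ}
    (hf : MemLp f 2 μ) (hg : MemLp g 2 μ) :
    (∫ a, f a * g a ∂μ) ^ 2 ≤ (∫ a, f a ^ 2 ∂μ) * ∫ a, g a ^ 2 ∂μ := by
  have inner_toLp : ∀ {u v : α → ℝ} (hu : MemLp u 2 μ) (hv : MemLp v 2 μ),
      inner ℝ (hu.toLp u) (hv.toLp v) = ∫ a, u a * v a ∂μ := by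
    intro u v hu hv
    rw [L2.inner_def]
    refine integral_congr_ae ?_
    filter_upwards [hu.coeFn_toLp, hv.coeFn_toLp] with a hua hva
    rw [hua, hva, real_inner_eq_re_inner, RCLike.inner_apply, conj_trivial, mul_comm]
    rfl
  simpa only [inner_toLp, ← sq] using real_inner_mul_inner_self_le (hf.toLp f) (hg.toLp g)

end CauchySchwarz

section TriangleDensity

variable {α : Type*} [MeasurableSpace α]

noncomputable def triangleDensity (μ : Measure α) (W : α → α → ℝ) : ℝ :=
  ∫ x, ∫ y, ∫ z, W x y * W x z * W y z ∂μ ∂μ ∂μ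

noncomputable def codegree (μ : Measure α) (W : α → α → ℝ) (x y : α) : ℝ :=
  ∫ z, W x z * W y z ∂μ

variable {μ : Measure α} [IsFiniteMeasure μ] {W : α → α → ℝ} {C : ℝ}

theorem memLp_uncurry_of_abs_le (hW : Measurable (uncurry W)) (hWC : ∀ x y, |W x y| ≤ C)
    (p : ENNReal) : MemLp (fun q : α × α => W q.1 q.2) p (μ.prod μ) :=
  MemLp.of_bound hW.aestronglyMeasurable C (ae_of_all _ fun q => hWC q.1 q.2)

theorem memLp_slice_of_abs_le (hW : Measurable (uncurry W)) (hWC : ∀ x y, |W x y| ≤ C)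
    (x : α) (p : ENNReal) : MemLp (W x) p μ :=
  MemLp.of_bound (hW.comp measurable_prodMk_left).aestronglyMeasurable C
    (ae_of_all _ fun y => hWC x y)

theorem measurable_codegree (hW : Measurable (uncurry W)) :
    Measurable (uncurry (codegree μ W)) := by
  have h : Measurable fun q : (α × α) × α => W q.1.1 q.2 * W q.1.2 q.2 :=
    (hW.comp (measurable_fst.fst.prodMk measurable_snd)).mul
      (hW.comp (measurable_fst.snd.prodMk measurable_snd))
  exact h.stronglyMeasurable.integral_prod_right'.measurable

theorem abs_codegree_le (hWC : ∀ x y, |W x y| ≤ C) (x y : α) :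
    |codegree μ W x y| ≤ C ^ 2 * μ.real Set.univ := by
  refine norm_integral_le_of_norm_le_const (μ := μ) (f := fun z => W x z * W y z)
    (ae_of_all _ fun z => ?_)
  rw [norm_mul, sq]
  exact mul_le_mul (hWC x z) (hWC y z) (norm_nonneg _) ((abs_nonneg _).trans (hWC x z))

theorem memLp_codegree (hW : Measurable (uncurry W)) (hWC : ∀ x y, |W x y| ≤ C)
    (p : ENNReal) : MemLp (fun q : α × α => codegree μ W q.1 q.2) p (μ.prod μ) :=
  MemLp.of_bound (measurable_codegree hW).aestronglyMeasurable _
    (ae_of_all _ fun q => abs_codegree_le hWC q.1 q.2)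

theorem sq_codegree_le (hW : Measurable (uncurry W)) (hWC : ∀ x y, |W x y| ≤ C) (x y : α) :
    codegree μ W x y ^ 2 ≤ (∫ z, W x z ^ 2 ∂μ) * ∫ z, W y z ^ 2 ∂μ :=
  sq_integral_mul_le_integral_sq_mul_integral_sq (memLp_slice_of_abs_le hW hWC x 2)
    (memLp_slice_of_abs_le hW hWC y 2)

theorem triangleDensity_eq_integral_mul_codegree (hW : Measurable (uncurry W))
    (hWC : ∀ x y, |W x y| ≤ C) :
    triangleDensity μ W = ∫ q, W q.1 q.2 * codegree μ W q.1 q.2 ∂μ.prod μ := by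
  have hint : Integrable (fun q : α × α => W q.1 q.2 * codegree μ W q.1 q.2) (μ.prod μ) :=
    (memLp_uncurry_of_abs_le hW hWC 2).integrable_mul (memLp_codegree hW hWC 2)
  simp_rw [triangleDensity, mul_assoc, integral_const_mul]
  exact (integral_prod _ hint).symm

theorem integral_sq_codegree_le (hW : Measurable (uncurry W)) (hWC : ∀ x y, |W x y| ≤ C) :
    ∫ q, codegree μ W q.1 q.2 ^ 2 ∂μ.prod μ ≤ (∫ x, ∫ y, W x y ^ 2 ∂μ ∂μ) ^ 2 := by
  have hsq : Integrable (fun x => ∫ y, W x y ^ 2 ∂μ) μ :=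
    ((memLp_uncurry_of_abs_le hW hWC 2).integrable_sq).integral_prod_left
  calc ∫ q, codegree μ W q.1 q.2 ^ 2 ∂μ.prod μ
      ≤ ∫ q, (∫ z, W q.1 z ^ 2 ∂μ) * ∫ z, W q.2 z ^ 2 ∂μ ∂μ.prod μ :=
        integral_mono_of_nonneg (ae_of_all _ fun _ => sq_nonneg _) (hsq.mul_prod hsq)
          (ae_of_all _ fun q => sq_codegree_le hW hWC q.1 q.2)
    _ = (∫ x, ∫ y, W x y ^ 2 ∂μ ∂μ) ^ 2 := by
        rw [integral_prod_mul (fun x => ∫ z, W x z ^ 2 ∂μ) (fun y => ∫ z, W y z ^ 2 ∂μ), sq]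

theorem sq_triangleDensity_le (hW : Measurable (uncurry W)) (hWC : ∀ x y, |W x y| ≤ C) :
    triangleDensity μ W ^ 2 ≤ (∫ x, ∫ y, W x y ^ 2 ∂μ ∂μ) ^ 3 := by
  have hnorm : ∫ q, W q.1 q.2 ^ 2 ∂μ.prod μ = ∫ x, ∫ y, W x y ^ 2 ∂μ ∂μ :=
    integral_prod _ (memLp_uncurry_of_abs_le hW hWC 2).integrable_sq
  have hnonneg : 0 ≤ ∫ x, ∫ y, W x y ^ 2 ∂μ ∂μ :=
    integral_nonneg fun _ => integral_nonneg fun _ => sq_nonneg _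
  calc triangleDensity μ W ^ 2
      ≤ (∫ q, W q.1 q.2 ^ 2 ∂μ.prod μ) * ∫ q, codegree μ W q.1 q.2 ^ 2 ∂μ.prod μ := by
        rw [triangleDensity_eq_integral_mul_codegree hW hWC]
        exact sq_integral_mul_le_integral_sq_mul_integral_sq
          (memLp_uncurry_of_abs_le hW hWC 2) (memLp_codegree hW hWC 2)
    _ ≤ (∫ x, ∫ y, W x y ^ 2 ∂μ ∂μ) * (∫ x, ∫ y, W x y ^ 2 ∂μ ∂μ) ^ 2 := by
        rw [hnorm]
        exact mul_le_mul_of_nonneg_left (integral_sq_codegree_le hW hWC) hnonneg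
    _ = (∫ x, ∫ y, W x y ^ 2 ∂μ ∂μ) ^ 3 := by ring

theorem triangleDensity_le_rpow (hW : Measurable (uncurry W)) (hWC : ∀ x y, |W x y| ≤ C) :
    triangleDensity μ W ≤ (∫ x, ∫ y, W x y ^ 2 ∂μ ∂μ) ^ ((3 : ℝ) / 2) := by
  have hnonneg : 0 ≤ ∫ x, ∫ y, W x y ^ 2 ∂μ ∂μ :=
    integral_nonneg fun _ => integral_nonneg fun _ => sq_nonneg _
  calc triangleDensity μ W ≤ |triangleDensity μ W| := le_abs_self _
    _ ≤ √((∫ x, ∫ y, W x y ^ 2 ∂μ ∂μ) ^ 3) := Real.abs_le_sqrt (sq_triangleDensity_le hW hWC)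
    _ = (∫ x, ∫ y, W x y ^ 2 ∂μ ∂μ) ^ ((3 : ℝ) / 2) := by
        rw [Real.sqrt_eq_rpow, ← Real.rpow_natCast, ← Real.rpow_mul hnonneg]
        norm_num

end TriangleDensity

open unitInterval

theorem setIntegral_Icc_eq_integral_unitInterval {E : Type*} [NormedAddCommGroup E]
    [NormedSpace ℝ E] (f : ℝ → E) :
    ∫ x in Set.Icc (0 : ℝ) 1, f x = ∫ x : I, f x :=
  (integral_subtype_comap measurableSet_Icc f).symm

theorem triangle_density_le_L2_norm_cubed_general (U : ℝ → ℝ → ℝ)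
    (hmeas : Measurable (Function.uncurry U))
    (hbd : ∀ x ∈ Set.Icc (0 : ℝ) 1, ∀ y ∈ Set.Icc (0 : ℝ) 1, 0 ≤ U x y ∧ U x y ≤ 1) :
    triW U ≤ (∫ x in Set.Icc (0 : ℝ) 1, ∫ y in Set.Icc (0 : ℝ) 1, (U x y) ^ 2)
      ^ ((3 : ℝ) / 2) := by
  have hW : Measurable (uncurry fun x y : I => U x y) :=
    hmeas.comp (measurable_subtype_coe.prodMap measurable_subtype_coe)
  have hWC : ∀ x y : I, |U x y| ≤ 1 := fun x y =>
    abs_le.2 ⟨by linarith [(hbd x x.2 y y.2).1], (hbd x x.2 y y.2).2⟩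
  -- On the subtype `I` the bound on `U` holds everywhere, not just on `[0,1]²`.
  simp_rw [triW, setIntegral_Icc_eq_integral_unitInterval]
  exact triangleDensity_le_rpow hW hWC

/-- For every symmetric measurable `U : [0,1]² → [0,1]`,
`t(U) ≤ (∫_{[0,1]²} U(x,y)² dx dy)^{3/2}`. -/
theorem triangle_density_le_L2_norm_cubed (U : ℝ → ℝ → ℝ)
    (hmeas : Measurable (Function.uncurry U)) (hsymm : ∀ x y, U x y = U y x)
    (hbd : ∀ x ∈ Set.Icc (0 : ℝ) 1, ∀ y ∈ Set.Icc (0 : ℝ) 1, 0 ≤ U x y ∧ U x y ≤ 1) :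
    triW U ≤ (∫ x in Set.Icc (0 : ℝ) 1, ∫ y in Set.Icc (0 : ℝ) 1, (U x y) ^ 2)
      ^ ((3 : ℝ) / 2) :=
  triangle_density_le_L2_norm_cubed_general U hmeas hbd
end

section
/- Let (p_k) and (x_k) be sequences with 0 < p_k < 1, p_k → 0. (i) If x_k > 0 and x_k / p_k → 0, then I_{p_k}(p_k + x_k) / ( x_k² / (2 p_k) ) → 1 as k → ∞. (ii) If x_k / p_k → ∞ and 0 < x_k ≤ 1 − p_k for all k, then I_{p_k}(p_k + x_k) / ( x_k log(x_k / p_k) ) → 1 as k → ∞. -/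
/-!
With Bennett's function `h(t) = (1 + t) log (1 + t) - t` one has
`I_p(p + x) = p h(x/p) + (1 - p) h(-x/(1 - p))`, and the second term lies between `0` and
`x² / (1 - p)` because `0 ≤ h(s) ≤ s²` for `s ≥ -1`.

(i) For `t ≥ 0`, `t² / (2 + t) ≤ h(t) ≤ t² / 2`, so `I_p(p + x) / (x² / (2p))` is squeezed
between `2 / (2 + x/p)` and `1 + 2p / (1 - p)`.

(ii) Here `p h(x/p) = (p + x) log (1 + x/p) - x`, and `log (1 + t) = log t + O(1)` for `t ≥ 1`,
so `I_p(p + x) / (x log (x/p))` is squeezed between `1 - 1 / log t` and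
`(1 + 1/t)(1 + log 2 / log t)` with `t = x/p`.
-/

open Real Filter

open Topology

noncomputable def bennett (t : ℝ) : ℝ := (1 + t) * log (1 + t) - t

lemma log_le_half_sub_inv {s : ℝ} (hs : 1 ≤ s) : log s ≤ (s - s⁻¹) / 2 := by
  have h := self_le_sinh_iff.2 (log_nonneg hs)
  rwa [sinh_log (by linarith)] at h

lemma bennett_nonneg {t : ℝ} (ht : -1 ≤ t) : 0 ≤ bennett t := by
  have h := self_sub_one_le_mul_log (x := 1 + t) (by linarith)
  unfold bennett
  linarith

lemma bennett_le_sq {t : ℝ} (ht : -1 ≤ t) : bennett t ≤ t ^ 2 := by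
  unfold bennett
  rcases (show 0 ≤ 1 + t by linarith).eq_or_lt with h | h
  · rw [← h]
    nlinarith
  · nlinarith [mul_le_mul_of_nonneg_left (log_le_sub_one_of_pos h) h.le]

lemma bennett_le_sq_div_two {t : ℝ} (ht : 0 ≤ t) : bennett t ≤ t ^ 2 / 2 := by
  have h1 : (0 : ℝ) < 1 + t := by linarith
  have h := mul_le_mul_of_nonneg_left (log_le_half_sub_inv (s := 1 + t) (by linarith)) h1.le
  have e : (1 + t) * ((1 + t - (1 + t)⁻¹) / 2) = ((1 + t) ^ 2 - 1) / 2 := by field_simp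
  unfold bennett
  nlinarith

lemma sq_div_two_add_le_bennett {t : ℝ} (ht : 0 ≤ t) : t ^ 2 / (2 + t) ≤ bennett t := by
  have h := mul_le_mul_of_nonneg_left (le_log_one_add_of_nonneg ht) (by linarith : 0 ≤ 1 + t)
  calc t ^ 2 / (2 + t) = (1 + t) * (2 * t / (t + 2)) - t := by field_simp; ring
    _ ≤ bennett t := by unfold bennett; linarith

lemma mul_bennett_div {p : ℝ} (x : ℝ) (hp : p ≠ 0) :
    p * bennett (x / p) = (p + x) * log (1 + x / p) - x := by
  unfold bennett
  field_simp

lemma Ip_add_eq {p : ℝ} (x : ℝ) (hp0 : p ≠ 0) (hp1 : p ≠ 1) :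
    Ip p (p + x) = p * bennett (x / p) + (1 - p) * bennett (-(x / (1 - p))) := by
  have hq : 1 - p ≠ 0 := sub_ne_zero.2 hp1.symm
  unfold Ip bennett
  have e1 : 1 + x / p = (p + x) / p := by field_simp
  have e2 : 1 + -(x / (1 - p)) = (1 - (p + x)) / (1 - p) := by field_simp; ring
  rw [e1, e2]
  field_simp
  ring

section Bounds

variable {p x : ℝ}

lemma mul_bennett_le_Ip_add (hp : 0 < p) (hp1 : p < 1) (hx1 : x ≤ 1 - p) :
    p * bennett (x / p) ≤ Ip p (p + x) := by
  have hq : 0 < 1 - p := by linarith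
  have hu : -1 ≤ -(x / (1 - p)) := by rw [neg_le_neg_iff, div_le_one hq]; exact hx1
  rw [Ip_add_eq x hp.ne' hp1.ne]
  nlinarith [bennett_nonneg hu]

lemma Ip_add_le_mul_bennett_add (hp : 0 < p) (hp1 : p < 1) (hx1 : x ≤ 1 - p) :
    Ip p (p + x) ≤ p * bennett (x / p) + x ^ 2 / (1 - p) := by
  have hq : 0 < 1 - p := by linarith
  have hu : -1 ≤ -(x / (1 - p)) := by rw [neg_le_neg_iff, div_le_one hq]; exact hx1
  have h := mul_le_mul_of_nonneg_left (bennett_le_sq hu) hq.le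
  have e : (1 - p) * (-(x / (1 - p))) ^ 2 = x ^ 2 / (1 - p) := by field_simp
  rw [Ip_add_eq x hp.ne' hp1.ne]
  linarith

variable (hp : 0 < p) (hp1 : p < 1) (hx : 0 < x) (hx1 : x ≤ 1 - p)
include hp hp1 hx hx1

lemma two_div_two_add_le_Ip_add_div :
    2 / (2 + x / p) ≤ Ip p (p + x) / (x ^ 2 / (2 * p)) := by
  rw [le_div_iff₀ (by positivity)]
  calc 2 / (2 + x / p) * (x ^ 2 / (2 * p)) = p * ((x / p) ^ 2 / (2 + x / p)) := by
        field_simp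
    _ ≤ p * bennett (x / p) := by gcongr; exact sq_div_two_add_le_bennett (by positivity)
    _ ≤ Ip p (p + x) := mul_bennett_le_Ip_add hp hp1 hx1

lemma Ip_add_div_le_one_add :
    Ip p (p + x) / (x ^ 2 / (2 * p)) ≤ 1 + 2 * p / (1 - p) := by
  have hq : 0 < 1 - p := by linarith
  rw [div_le_iff₀ (by positivity)]
  calc Ip p (p + x) ≤ p * bennett (x / p) + x ^ 2 / (1 - p) :=
        Ip_add_le_mul_bennett_add hp hp1 hx1
    _ ≤ p * ((x / p) ^ 2 / 2) + x ^ 2 / (1 - p) := by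
        gcongr; exact bennett_le_sq_div_two (by positivity)
    _ = (1 + 2 * p / (1 - p)) * (x ^ 2 / (2 * p)) := by field_simp

lemma one_sub_inv_log_le_Ip_add_div (ht : 1 < x / p) :
    1 - (log (x / p))⁻¹ ≤ Ip p (p + x) / (x * log (x / p)) := by
  have hL : 0 < log (x / p) := log_pos ht
  rw [le_div_iff₀ (by positivity)]
  calc (1 - (log (x / p))⁻¹) * (x * log (x / p)) = x * log (x / p) - x := by field_simp
    _ ≤ (p + x) * log (1 + x / p) - x := by
        gcongr ?_ * ?_ - x
        · linarith
        · exact log_le_log (by positivity) (by linarith)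
    _ = p * bennett (x / p) := (mul_bennett_div x hp.ne').symm
    _ ≤ Ip p (p + x) := mul_bennett_le_Ip_add hp hp1 hx1

lemma Ip_add_div_le_mul (ht : 1 < x / p) :
    Ip p (p + x) / (x * log (x / p)) ≤ (1 + (x / p)⁻¹) * (1 + log 2 / log (x / p)) := by
  have hq : 0 < 1 - p := by linarith
  have hL : 0 < log (x / p) := log_pos ht
  have hlog : log (1 + x / p) ≤ log 2 + log (x / p) := by
    rw [← log_mul two_ne_zero (by positivity)]
    exact log_le_log (by positivity) (by linarith)
  have hsq : x ^ 2 / (1 - p) ≤ x := by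
    rw [div_le_iff₀ hq]
    nlinarith
  rw [div_le_iff₀ (by positivity)]
  calc Ip p (p + x) ≤ p * bennett (x / p) + x ^ 2 / (1 - p) :=
        Ip_add_le_mul_bennett_add hp hp1 hx1
    _ ≤ (p + x) * log (1 + x / p) := by rw [mul_bennett_div x hp.ne']; linarith
    _ ≤ (p + x) * (log 2 + log (x / p)) := by gcongr
    _ = (1 + (x / p)⁻¹) * (1 + log 2 / log (x / p)) * (x * log (x / p)) := by
        field_simp
        ring

end Bounds

theorem tendsto_Ip_add_div_sq {ι : Type*} {l : Filter ι} {p x : ι → ℝ}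
    (hp : ∀ᶠ k in l, 0 < p k) (hp0 : Tendsto p l (𝓝 0)) (hx : ∀ᶠ k in l, 0 < x k)
    (hxp : Tendsto (fun k => x k / p k) l (𝓝 0)) :
    Tendsto (fun k => Ip (p k) (p k + x k) / (x k ^ 2 / (2 * p k))) l (𝓝 1) := by
  have hlow : Tendsto (fun k => 2 / (2 + x k / p k)) l (𝓝 1) := by
    have h2 : Tendsto (fun _ => (2 : ℝ)) l (𝓝 2) := tendsto_const_nhds
    simpa [Pi.div_def] using h2.div (h2.add hxp) (by norm_num)
  have hup : Tendsto (fun k => 1 + 2 * p k / (1 - p k)) l (𝓝 1) := by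
    simpa using tendsto_const_nhds.add
      ((hp0.const_mul 2).div (tendsto_const_nhds.sub hp0) (by norm_num))
  have hsmall : ∀ᶠ k in l, p k < 1 / 2 ∧ x k / p k < 1 :=
    (hp0.eventually_lt_const (by norm_num)).and (hxp.eventually_lt_const one_pos)
  refine tendsto_of_tendsto_of_tendsto_of_le_of_le' hlow hup ?_ ?_ <;>
    filter_upwards [hp, hx, hsmall] with k hpk hxk ⟨hp2, ht⟩ <;>
    have hx1 : x k ≤ 1 - p k := by linarith [(div_lt_one hpk).1 ht]
  · exact two_div_two_add_le_Ip_add_div hpk (by linarith) hxk hx1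
  · exact Ip_add_div_le_one_add hpk (by linarith) hxk hx1

theorem tendsto_Ip_add_div_mul_log {ι : Type*} {l : Filter ι} {p x : ι → ℝ}
    (hp : ∀ᶠ k in l, 0 < p k) (hx : ∀ᶠ k in l, 0 < x k ∧ x k ≤ 1 - p k)
    (hxp : Tendsto (fun k => x k / p k) l atTop) :
    Tendsto (fun k => Ip (p k) (p k + x k) / (x k * log (x k / p k))) l (𝓝 1) := by
  have hlog := tendsto_log_atTop.comp hxp
  have hlow : Tendsto (fun k => 1 - (log (x k / p k))⁻¹) l (𝓝 1) := by
    simpa using tendsto_const_nhds.sub hlog.inv_tendsto_atTop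
  have hup : Tendsto (fun k => (1 + (x k / p k)⁻¹) * (1 + log 2 / log (x k / p k))) l (𝓝 1) := by
    have h1 : Tendsto (fun _ => (1 : ℝ)) l (𝓝 1) := tendsto_const_nhds
    simpa using (h1.add hxp.inv_tendsto_atTop).mul (h1.add (hlog.const_div_atTop (log 2)))
  refine tendsto_of_tendsto_of_tendsto_of_le_of_le' hlow hup ?_ ?_ <;>
    filter_upwards [hp, hx, hxp.eventually_gt_atTop 1] with k hpk ⟨hxk, hx1⟩ ht
  · exact one_sub_inv_log_le_Ip_add_div hpk (by linarith) hxk hx1 ht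
  · exact Ip_add_div_le_mul hpk (by linarith) hxk hx1 ht

/-- Asymptotics of `I_p(p+x)`: if `0 < p_k < 1`, `p_k → 0`, then
(i) if `x_k > 0` and `x_k/p_k → 0`, then `I_{p_k}(p_k + x_k) ∼ x_k²/(2p_k)`;
(ii) if `x_k/p_k → ∞` and `0 < x_k ≤ 1 - p_k`, then `I_{p_k}(p_k + x_k) ∼ x_k log(x_k/p_k)`. -/
theorem Ip_asymptotics (p x : ℕ → ℝ) (hp : ∀ k, 0 < p k ∧ p k < 1)
    (hp0 : Tendsto p atTop (nhds 0)) :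
    ((∀ k, 0 < x k) → Tendsto (fun k => x k / p k) atTop (nhds 0) →
        Tendsto (fun k => Ip (p k) (p k + x k) / ((x k) ^ 2 / (2 * p k))) atTop (nhds 1))
      ∧ (Tendsto (fun k => x k / p k) atTop atTop → (∀ k, 0 < x k ∧ x k ≤ 1 - p k) →
        Tendsto (fun k => Ip (p k) (p k + x k) / (x k * Real.log (x k / p k)))
          atTop (nhds 1)) := by
  have hp' : ∀ᶠ k in atTop, 0 < p k := .of_forall fun k => (hp k).1
  exact ⟨fun hx hxp => tendsto_Ip_add_div_sq hp' hp0 (.of_forall hx) hxp,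
    fun hxp hx => tendsto_Ip_add_div_mul_log hp' (.of_forall hx) hxp⟩
end

section
/- There exists p₀ > 0 such that for all 0 < p ≤ p₀ and all real numbers x, b with 0 ≤ x ≤ b and 0 < b ≤ 1 − p − 1/log(1/p), one has I_p(p + x) ≥ (x/b)² · I_p(p + b). -/
/-!
Write `f t = I_p(p + t)`. The inequality says that `f t / t²` is antitone on `(0, b]`, i.e. that
`k t = 2 f t - t f' t` (`quadGap p t`) is nonnegative there. Since `k 0 = 0` and
`k' = G := f' - t f''` (`quadGapDeriv p`), it suffices that `G ≥ 0` on `[0, X]`, where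
`X = 1 - p - 1 / log (1 / p)`. Again `G 0 = 0`, and `G' t = t (1 / (p + t)² - 1 / (1 - p - t)²)`
changes sign only at `p + t = 1/2`, so the minimum of `G` on `[0, X]` is attained at an endpoint.
With `L = log (1 / p)` one computes `G X = log ((L - 1) (1 - p)) + p L² / (L - 1)`, which is
nonnegative once `(L - 1) (1 - p) ≥ 1`, e.g. for `p ≤ e⁻³`.
-/

open Real Filter

open Set

theorem min_le_of_monotoneOn_of_antitoneOn {α β : Type*} [LinearOrder α] [LinearOrder β]
    {g : α → β} {a m c x : α} (h₁ : MonotoneOn g (Icc a m)) (h₂ : AntitoneOn g (Icc m c))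
    (hx : x ∈ Icc a c) : min (g a) (g c) ≤ g x := by
  rcases le_total x m with hxm | hmx
  · exact (min_le_left _ _).trans (h₁ ⟨le_rfl, hx.1.trans hxm⟩ ⟨hx.1, hxm⟩ hx.1)
  · exact (min_le_right _ _).trans (h₂ ⟨hmx, hx.2⟩ ⟨hmx.trans hx.2, le_rfl⟩ hx.2)

section Calculus

variable {f f' : ℝ → ℝ} {a b : ℝ}

theorem monotoneOn_Icc_of_hasDerivAt_nonneg (hf : ∀ x ∈ Icc a b, HasDerivAt f (f' x) x)
    (hf' : ∀ x ∈ Ioo a b, 0 ≤ f' x) : MonotoneOn f (Icc a b) :=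
  monotoneOn_of_hasDerivWithinAt_nonneg (convex_Icc a b)
    (fun x hx ↦ (hf x hx).continuousAt.continuousWithinAt)
    (fun x hx ↦ by
      rw [interior_Icc] at hx ⊢
      exact (hf x (Ioo_subset_Icc_self hx)).hasDerivWithinAt)
    (by rwa [interior_Icc])

theorem antitoneOn_Icc_of_hasDerivAt_nonpos (hf : ∀ x ∈ Icc a b, HasDerivAt f (f' x) x)
    (hf' : ∀ x ∈ Ioo a b, f' x ≤ 0) : AntitoneOn f (Icc a b) :=
  antitoneOn_of_hasDerivWithinAt_nonpos (convex_Icc a b)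
    (fun x hx ↦ (hf x hx).continuousAt.continuousWithinAt)
    (fun x hx ↦ by
      rw [interior_Icc] at hx ⊢
      exact (hf x (Ioo_subset_Icc_self hx)).hasDerivWithinAt)
    (by rwa [interior_Icc])

theorem antitoneOn_div_pow_of_mul_deriv_le {n : ℕ} (ha : 0 < a)
    (hf : ∀ t ∈ Icc a b, HasDerivAt f (f' t) t) (h : ∀ t ∈ Ioo a b, t * f' t ≤ n * f t) :
    AntitoneOn (fun t ↦ f t / t ^ n) (Icc a b) := by
  refine antitoneOn_Icc_of_hasDerivAt_nonpos
    (fun t ht ↦ (hf t ht).div (hasDerivAt_pow n t) (pow_ne_zero n (ha.trans_le ht.1).ne'))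
    fun t ht ↦ div_nonpos_of_nonpos_of_nonneg ?_ (by positivity)
  have ht₀ : 0 < t := ha.trans ht.1
  have hpow : t * (n * t ^ (n - 1)) = n * t ^ n := by
    cases n with
    | zero => simp
    | succ k => rw [Nat.add_sub_cancel, pow_succ]; ring
  have : t * (f' t * t ^ n - f t * (n * t ^ (n - 1))) = t ^ n * (t * f' t - n * f t) := by
    linear_combination (-f t) * hpow
  nlinarith [pow_pos ht₀ n, h t ht]

theorem pow_div_mul_le_of_mul_deriv_le {n : ℕ} (ha : 0 < a) (hab : a ≤ b)
    (hf : ∀ t ∈ Icc a b, HasDerivAt f (f' t) t) (h : ∀ t ∈ Ioo a b, t * f' t ≤ n * f t) :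
    (a / b) ^ n * f b ≤ f a := by
  have key := antitoneOn_div_pow_of_mul_deriv_le ha hf h (left_mem_Icc.2 hab)
    (right_mem_Icc.2 hab) hab
  calc (a / b) ^ n * f b = a ^ n * (f b / b ^ n) := by rw [div_pow]; ring
    _ ≤ a ^ n * (f a / a ^ n) := by gcongr
    _ = f a := by field_simp

end Calculus

noncomputable def IpDeriv (p x : ℝ) : ℝ :=
  log (x / p) - log ((1 - x) / (1 - p))

noncomputable def quadGap (p t : ℝ) : ℝ :=
  2 * Ip p (p + t) - t * IpDeriv p (p + t)

noncomputable def quadGapDeriv (p t : ℝ) : ℝ :=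
  IpDeriv p (p + t) - t * (1 / (p + t) + 1 / (1 - (p + t)))

section Derivatives

variable {p x t : ℝ}

theorem Ip_self (p : ℝ) : Ip p p = 0 := by
  simp [Ip]

theorem IpDeriv_self (p : ℝ) : IpDeriv p p = 0 := by
  simp [IpDeriv]

theorem hasDerivAt_Ip (hp : p ≠ 0) (hp₁ : p ≠ 1) (hx : x ≠ 0) (hx₁ : x ≠ 1) :
    HasDerivAt (Ip p) (IpDeriv p x) x := by
  have hx₁' : 1 - x ≠ 0 := sub_ne_zero.2 (Ne.symm hx₁)
  have hp₁' : 1 - p ≠ 0 := sub_ne_zero.2 (Ne.symm hp₁)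
  have h₁ := ((hasDerivAt_id' x).div_const p).log (div_ne_zero hx hp)
  have h₂ := (((hasDerivAt_id' x).const_sub 1).div_const (1 - p)).log (div_ne_zero hx₁' hp₁')
  refine (((hasDerivAt_id' x).mul h₁).add (((hasDerivAt_id' x).const_sub 1).mul h₂)).congr_deriv ?_
  unfold IpDeriv
  field_simp
  ring

theorem hasDerivAt_IpDeriv (hp : p ≠ 0) (hp₁ : p ≠ 1) (hx : x ≠ 0) (hx₁ : x ≠ 1) :
    HasDerivAt (IpDeriv p) (1 / x + 1 / (1 - x)) x := by
  have hx₁' : 1 - x ≠ 0 := sub_ne_zero.2 (Ne.symm hx₁)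
  have hp₁' : 1 - p ≠ 0 := sub_ne_zero.2 (Ne.symm hp₁)
  have h₁ := ((hasDerivAt_id' x).div_const p).log (div_ne_zero hx hp)
  have h₂ := (((hasDerivAt_id' x).const_sub 1).div_const (1 - p)).log (div_ne_zero hx₁' hp₁')
  refine (h₁.sub h₂).congr_deriv ?_
  field_simp
  ring

theorem hasDerivAt_quadGap (hp : p ≠ 0) (hp₁ : p ≠ 1) (ht : p + t ≠ 0) (ht₁ : p + t ≠ 1) :
    HasDerivAt (quadGap p) (quadGapDeriv p t) t := by
  have hI := (hasDerivAt_Ip hp hp₁ ht ht₁).comp_const_add p t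
  have hD := (hasDerivAt_IpDeriv hp hp₁ ht ht₁).comp_const_add p t
  refine ((hI.const_mul 2).sub ((hasDerivAt_id' t).mul hD)).congr_deriv ?_
  unfold quadGapDeriv
  ring

theorem hasDerivAt_quadGapDeriv (hp : p ≠ 0) (hp₁ : p ≠ 1) (ht : p + t ≠ 0)
    (ht₁ : p + t ≠ 1) :
    HasDerivAt (quadGapDeriv p) (t * (1 / (p + t) ^ 2 - 1 / (1 - (p + t)) ^ 2)) t := by
  have ht₁' : 1 - (p + t) ≠ 0 := sub_ne_zero.2 (Ne.symm ht₁)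
  have hD := (hasDerivAt_IpDeriv hp hp₁ ht ht₁).comp_const_add p t
  have hsum : HasDerivAt (fun s ↦ p + s) 1 t := (hasDerivAt_id' t).const_add p
  have hinv₁ := (hasDerivAt_const t (1 : ℝ)).div hsum ht
  have hinv₂ := (hasDerivAt_const t (1 : ℝ)).div (hsum.const_sub 1) ht₁'
  refine (hD.sub ((hasDerivAt_id' t).mul (hinv₁.add hinv₂))).congr_deriv ?_
  dsimp only [Pi.add_apply, Pi.div_apply]
  field_simp
  ring

end Derivatives

section Positivity

variable {p t : ℝ}

theorem quadGapDeriv_endpoint (hp : 0 < p) (hL : 1 < log (1 / p)) :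
    quadGapDeriv p (1 - p - 1 / log (1 / p)) =
      log ((log (1 / p) - 1) * (1 - p)) + p * log (1 / p) ^ 2 / (log (1 / p) - 1) := by
  set L := log (1 / p) with hL_def
  have hlog_p : log p = -L := by rw [hL_def, one_div, log_inv, neg_neg]
  have hp₁ : p < 1 := by
    by_contra! h
    have := log_nonneg h
    linarith
  have hL₁ : 0 < L - 1 := by linarith
  have hsum : p + (1 - p - 1 / L) = (L - 1) / L := by field_simp; ring
  have hcompl : 1 - (L - 1) / L = 1 / L := by field_simp; ring
  have hlog : log ((L - 1) / L / p) - log (1 / L / (1 - p)) = log ((L - 1) * (1 - p)) + L := by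
    rw [← log_div (by positivity) (by positivity),
      show (L - 1) / L / p / (1 / L / (1 - p)) = (L - 1) * (1 - p) / p by field_simp,
      log_div (by positivity) hp.ne', hlog_p, sub_neg_eq_add]
  unfold quadGapDeriv IpDeriv
  rw [hsum, hcompl, hlog]
  field_simp
  ring

theorem quadGapDeriv_nonneg (hp : 0 < p) (hp_half : p ≤ 1 / 2)
    (hLp : 1 ≤ (log (1 / p) - 1) * (1 - p)) (ht : t ∈ Icc 0 (1 - p - 1 / log (1 / p))) :
    0 ≤ quadGapDeriv p t := by
  have hL : 1 < log (1 / p) := by nlinarith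
  have hL₀ : 0 < 1 / log (1 / p) := by positivity
  have hderiv : ∀ s, 0 < p + s → p + s < 1 → HasDerivAt (quadGapDeriv p)
      (s * (1 / (p + s) ^ 2 - 1 / (1 - (p + s)) ^ 2)) s := fun s hs hs' ↦
    hasDerivAt_quadGapDeriv hp.ne' (by linarith) hs.ne' hs'.ne
  have hmono : MonotoneOn (quadGapDeriv p) (Icc 0 (1 / 2 - p)) := by
    refine monotoneOn_Icc_of_hasDerivAt_nonneg
      (fun s hs ↦ hderiv s (by linarith [hs.1]) (by linarith [hs.2])) fun s hs ↦ ?_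
    have : 1 / (1 - (p + s)) ^ 2 ≤ 1 / (p + s) ^ 2 :=
      one_div_le_one_div_of_le (by nlinarith [hs.1]) (pow_le_pow_left₀ (by linarith [hs.1])
        (by linarith [hs.2]) 2)
    exact mul_nonneg hs.1.le (sub_nonneg.2 this)
  have hanti : AntitoneOn (quadGapDeriv p) (Icc (1 / 2 - p) (1 - p - 1 / log (1 / p))) := by
    refine antitoneOn_Icc_of_hasDerivAt_nonpos
      (fun s hs ↦ hderiv s (by linarith [hs.1]) (by linarith [hs.2])) fun s hs ↦ ?_
    have : 1 / (p + s) ^ 2 ≤ 1 / (1 - (p + s)) ^ 2 :=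
      one_div_le_one_div_of_le (by nlinarith [hs.2]) (pow_le_pow_left₀ (by linarith [hs.2])
        (by linarith [hs.1]) 2)
    exact mul_nonpos_of_nonneg_of_nonpos (by linarith [hs.1]) (sub_nonpos.2 this)
  have hzero : quadGapDeriv p 0 = 0 := by simp [quadGapDeriv, IpDeriv_self]
  have hend : 0 ≤ quadGapDeriv p (1 - p - 1 / log (1 / p)) := by
    rw [quadGapDeriv_endpoint hp hL]
    have : 0 < log (1 / p) - 1 := by linarith
    exact add_nonneg (log_nonneg hLp) (by positivity)
  have := min_le_of_monotoneOn_of_antitoneOn hmono hanti ht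
  rw [hzero] at this
  exact (le_min le_rfl hend).trans this

theorem quadGap_nonneg (hp : 0 < p) (hp_half : p ≤ 1 / 2)
    (hLp : 1 ≤ (log (1 / p) - 1) * (1 - p)) (ht : t ∈ Icc 0 (1 - p - 1 / log (1 / p))) :
    0 ≤ quadGap p t := by
  have hL₀ : 0 < 1 / log (1 / p) := by
    have : 0 < log (1 / p) := by nlinarith
    positivity
  have hmono : MonotoneOn (quadGap p) (Icc 0 (1 - p - 1 / log (1 / p))) :=
    monotoneOn_Icc_of_hasDerivAt_nonneg
      (fun s hs ↦ hasDerivAt_quadGap hp.ne' (by linarith) (by linarith [hs.1])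
        (by linarith [hs.2]))
      fun s hs ↦ quadGapDeriv_nonneg hp hp_half hLp (Ioo_subset_Icc_self hs)
  have hzero : quadGap p 0 = 0 := by simp [quadGap, Ip_self]
  simpa [hzero] using hmono ⟨le_rfl, ht.1.trans ht.2⟩ ht ht.1

theorem le_half_and_one_le_log_one_div_sub_one_mul {p : ℝ} (hp : 0 < p) (hp₀ : p ≤ exp (-3)) :
    p ≤ 1 / 2 ∧ 1 ≤ (log (1 / p) - 1) * (1 - p) := by
  have hL : 3 ≤ log (1 / p) := by
    rw [one_div, log_inv, le_neg, ← log_exp (-3)]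
    exact log_le_log hp hp₀
  have hp_half : p ≤ 1 / 2 := by
    have : 4 ≤ exp 3 := by linarith [add_one_le_exp (3 : ℝ)]
    calc p ≤ exp (-3) := hp₀
      _ = (exp 3)⁻¹ := exp_neg 3
      _ ≤ 1 / 2 := by rw [one_div]; exact inv_anti₀ (by norm_num) (by linarith)
  exact ⟨hp_half, by nlinarith⟩

end Positivity

/-- There exists `p₀ > 0` such that for all `0 < p ≤ p₀` and all
`0 ≤ x ≤ b` with `0 < b ≤ 1 - p - 1/log(1/p)`, one has `I_p(p+x) ≥ (x/b)² I_p(p+b)`. -/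
theorem Ip_quadratic_lower_bound :
    ∃ p₀ > (0 : ℝ), ∀ p : ℝ, 0 < p → p ≤ p₀ → ∀ x b : ℝ,
      0 ≤ x → x ≤ b → 0 < b → b ≤ 1 - p - 1 / Real.log (1 / p) →
      Ip p (p + x) ≥ (x / b) ^ 2 * Ip p (p + b) := by
  refine ⟨exp (-3), exp_pos _, fun p hp hp₀ x b hx hxb _ hbX ↦ ?_⟩
  obtain ⟨hp_half, hLp⟩ := le_half_and_one_le_log_one_div_sub_one_mul hp hp₀
  have hL₀ : 0 < 1 / log (1 / p) := by
    have : 0 < log (1 / p) := by nlinarith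
    positivity
  rcases hx.eq_or_lt with rfl | hx
  · simp [Ip_self]
  refine pow_div_mul_le_of_mul_deriv_le (f := fun t ↦ Ip p (p + t)) hx hxb
    (fun t ht ↦ (hasDerivAt_Ip hp.ne' (by linarith) (by linarith [ht.1])
      (by linarith [ht.2])).comp_const_add p t) fun t ht ↦ ?_
  have := quadGap_nonneg hp hp_half hLp ⟨hx.le.trans ht.1.le, ht.2.le.trans hbX⟩
  rw [quadGap] at this
  push_cast
  linarith
end
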